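/- arXiv:1704.04007 — 3 statements merged into one kernel-verified Lean document; each statement's English description precedes it below -/
import Mathlib

section
/- Let P = (ρ, E) be a polymatroid on a finite set E with |E| = n that additionally satisfies ρ(X) ≤ |X| for all X ⊆ E, let k = ρ(E), and suppose P is non-degenerate (ρ({x}) > 0 for all x ∈ E and d ≥ 2, where d = min{|Y| : Y ⊆ E, ρ(E \ Y) < ρ(E)}). Let r ≥ 1, δ ≥ 2, t ≥ 1 be integers, and suppose there is an information set X₀ ⊆ E (i.e., ρ(X₀) = k and ρ(Y) < k for every Y ⊊ X₀) such that every x ∈ X₀ has t repair sets R_1, …, R_t ⊆ E with: x ∈ R_i for all i; |R_i| ≤ r + δ − 1 for all i; min{|Y| : Y ⊆ R_i, ρ(R_i \ Y) < ρ(R_i)} ≥ δ for all i; and R_i ∩ R_j = {x} for i ≠ j. Then d ≤ n − ⌈k⌉ + 1 − (⌈(t(⌈k⌉ − 1) + 1)/(t(r − 1) + 1)⌉ − 1)(δ − 1). -/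
/-- A polymatroid given by a real-valued set function on subsets of a finite
ground set. -/
structure PolyMatroid (α : Type) [DecidableEq α] where
  E : Finset α
  rk : Finset α → ℝ
  rk_empty : rk ∅ = 0
  rk_mono : ∀ X Y : Finset α, X ⊆ Y → Y ⊆ E → rk X ≤ rk Y
  rk_submod : ∀ X Y : Finset α, X ⊆ E → Y ⊆ E → rk (X ∪ Y) + rk (X ∩ Y) ≤ rk X + rk Y

namespace PolyMatroid

variable {α : Type} [DecidableEq α]

/-- `d_X = min {|Y| : Y ⊆ X, ρ(X \ Y) < ρ(X)}`. -/
noncomputable def dist (P : PolyMatroid α) (X : Finset α) : ℕ :=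
  sInf {m : ℕ | ∃ Y : Finset α, Y ⊆ X ∧ Y.card = m ∧ P.rk (X \ Y) < P.rk X}

end PolyMatroid

/-!
Call `F` spanned by `S` when `ρ(S ∪ F) ≤ ρ(S)`, i.e. `F` lies in the closure of `S`. Starting from
`S = F = ∅`, repeatedly pick `x ∈ X₀` outside the closure of `S ∪ F`. Each repair set `R` of `x`
has at least `δ - 1` elements outside `S ∪ F ∪ {x}`, for otherwise `S ∪ F` would contain all but
fewer than `d_R` elements of `R` and hence span `R ∋ x`. Moving `δ - 1` of them into `F` and the
remaining at most `r - 1` new elements of `R`, together with `x`, into `S` keeps `F` spanned by `S`,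
because deleting fewer than `d_R` elements from `R` does not lower its rank. For
`N = ⌈(t(⌈k⌉ - 1) + 1)/(t(r - 1) + 1)⌉ - 1` we have `N(t(r - 1) + 1) ≤ t(⌈k⌉ - 1)`, so
`⌈k⌉ - 1 - N(r - 1)` rounds using `N` repair sets in total, at most `t` per round, end with
`|S| ≤ ⌈k⌉ - 1` and `|F| = N(δ - 1)`. Padding `S` to `⌈k⌉ - 1` elements outside `F` gives a set
`S ∪ F` of rank less than `k`, and its complement, of size `n - ⌈k⌉ + 1 - N(δ - 1)`, bounds `d`.
-/

namespace Finset

variable {α ι : Type*} [DecidableEq α] [Fintype ι]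

lemma card_union_biUnion_eq {F : Finset α} {Y : ι → Finset α} {e : ℕ}
    (hF : ∀ i, Disjoint F (Y i)) (hY : Pairwise fun i j ↦ Disjoint (Y i) (Y j))
    (hcard : ∀ i, (Y i).card = e) :
    (F ∪ univ.biUnion Y).card = F.card + Fintype.card ι * e := by
  rw [card_union_of_disjoint ((disjoint_biUnion_right _ _ _).2 fun i _ ↦ hF i),
    card_biUnion fun i _ j _ hij ↦ hY hij]
  simp [hcard]

lemma card_union_insert_biUnion_sdiff_le (S T : Finset α) {x : α} {R Y : ι → Finset α}
    {c e : ℕ} (hYR : ∀ i, Y i ⊆ R i) (hxR : ∀ i, x ∈ R i) (hxY : ∀ i, x ∉ Y i)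
    (hR : ∀ i, (R i).card ≤ c + e + 1) (hY : ∀ i, (Y i).card = e) :
    ((S ∪ insert x (univ.biUnion R)) \ (T ∪ univ.biUnion Y)).card ≤
      S.card + 1 + Fintype.card ι * c := by
  have hsub : (S ∪ insert x (univ.biUnion R)) \ (T ∪ univ.biUnion Y) ⊆
      S ∪ insert x (univ.biUnion fun i ↦ R i \ insert x (Y i)) := by
    intro z hz
    simp only [mem_sdiff, mem_union, mem_insert, mem_biUnion, mem_univ, true_and, not_or,
      not_exists] at hz ⊢
    tauto
  have hRY : ∀ i ∈ univ, (R i \ insert x (Y i)).card ≤ c := by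
    intro i _
    rw [card_sdiff_of_subset (insert_subset (hxR i) (hYR i)), card_insert_of_notMem (hxY i), hY i]
    have := hR i
    omega
  calc _ ≤ (S ∪ insert x (univ.biUnion fun i ↦ R i \ insert x (Y i))).card := card_le_card hsub
    _ ≤ S.card + ((univ.biUnion fun i ↦ R i \ insert x (Y i)).card + 1) :=
      (card_union_le _ _).trans (Nat.add_le_add_left (card_insert_le _ _) _)
    _ ≤ S.card + 1 + Fintype.card ι * c := by
      have := card_biUnion_le_card_mul univ _ c hRY
      rw [card_univ] at this
      omega

end Finset

namespace PolyMatroid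

variable {α : Type} [DecidableEq α] (P : PolyMatroid α)

open Finset

lemma rk_nonneg {X : Finset α} (hX : X ⊆ P.E) : 0 ≤ P.rk X :=
  P.rk_empty ▸ P.rk_mono ∅ X (empty_subset X) hX

lemma dist_le_card {X Y : Finset α} (hY : Y ⊆ X) (h : P.rk (X \ Y) < P.rk X) :
    P.dist X ≤ Y.card :=
  Nat.sInf_le ⟨Y, hY, rfl, h⟩

lemma rk_sdiff_eq_of_card_lt_dist {X Y : Finset α} (hX : X ⊆ P.E) (hY : Y ⊆ X)
    (h : Y.card < P.dist X) : P.rk (X \ Y) = P.rk X :=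
  (P.rk_mono _ _ sdiff_subset hX).antisymm <| not_lt.1 fun hlt ↦
    (P.dist_le_card hY hlt).not_gt h

lemma rk_pos_of_dist_ne_zero (h : P.dist P.E ≠ 0) : 0 < P.rk P.E := by
  by_contra hle
  refine h (Nat.sInf_eq_zero.2 (Or.inr (Set.eq_empty_of_forall_notMem ?_)))
  rintro m ⟨Y, -, -, hY⟩
  exact hle ((P.rk_nonneg sdiff_subset).trans_lt hY)

def Spans (A B : Finset α) : Prop := P.rk (A ∪ B) ≤ P.rk A

variable {P}

lemma Spans.mono_left {A A' B : Finset α} (h : P.Spans A B) (hAA' : A ⊆ A') (hA' : A' ⊆ P.E)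
    (hB : B ⊆ P.E) : P.Spans A' B := by
  have hsub := P.rk_submod A' (A ∪ B) hA' (union_subset (hAA'.trans hA') hB)
  have hunion : A' ∪ (A ∪ B) = A' ∪ B := by
    rw [← union_assoc, union_eq_left.2 hAA']
  have hinter : P.rk A ≤ P.rk (A' ∩ (A ∪ B)) :=
    P.rk_mono _ _ (subset_inter hAA' subset_union_left) (inter_subset_left.trans hA')
  unfold Spans at h ⊢
  rw [hunion] at hsub
  linarith

lemma Spans.mono_right {A B B' : Finset α} (h : P.Spans A B) (hB' : B' ⊆ B)
    (hAB : A ∪ B ⊆ P.E) : P.Spans A B' :=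
  (P.rk_mono _ _ (union_subset_union_right hB') hAB).trans h

lemma Spans.union {A B C : Finset α} (hB : P.Spans A B) (hC : P.Spans A C) (hA : A ⊆ P.E)
    (hBE : B ⊆ P.E) (hCE : C ⊆ P.E) : P.Spans A (B ∪ C) := by
  have hsub := P.rk_submod (A ∪ B) (A ∪ C) (union_subset hA hBE) (union_subset hA hCE)
  have hunion : A ∪ B ∪ (A ∪ C) = A ∪ (B ∪ C) := by
    ext; simp only [mem_union]; tauto
  have hinter : P.rk A ≤ P.rk ((A ∪ B) ∩ (A ∪ C)) :=
    P.rk_mono _ _ (subset_inter subset_union_left subset_union_left)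
      (inter_subset_left.trans (union_subset hA hBE))
  unfold Spans at hB hC ⊢
  rw [hunion] at hsub
  linarith

lemma Spans.biUnion {ι : Type*} {A : Finset α} {I : Finset ι} {Y : ι → Finset α}
    (h : ∀ i ∈ I, P.Spans A (Y i)) (hA : A ⊆ P.E) (hY : ∀ i ∈ I, Y i ⊆ P.E) :
    P.Spans A (I.biUnion Y) := by
  classical
  induction I using Finset.induction_on with
  | empty => simp [Spans]
  | insert i I _ ih =>
    rw [biUnion_insert]
    exact (h i (mem_insert_self i I)).union
      (ih (fun j hj ↦ h j (mem_insert_of_mem hj)) fun j hj ↦ hY j (mem_insert_of_mem hj))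
      hA (hY i (mem_insert_self i I)) (biUnion_subset.2 fun j hj ↦ hY j (mem_insert_of_mem hj))

lemma Spans.union_of_spans_union {A B C : Finset α} (hB : P.Spans A B) (hC : P.Spans (A ∪ B) C) :
    P.Spans A (B ∪ C) := by
  unfold Spans at *
  rw [← union_assoc]
  exact hC.trans hB

lemma spans_sdiff_of_card_lt_dist {R Y : Finset α} (hR : R ⊆ P.E) (hY : Y ⊆ R)
    (h : Y.card < P.dist R) : P.Spans (R \ Y) Y := by
  rw [Spans, sdiff_union_of_subset hY, P.rk_sdiff_eq_of_card_lt_dist hR hY h]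

lemma dist_le_card_sdiff_of_not_spans {R C : Finset α} {x : α} (hR : R ⊆ P.E) (hC : C ⊆ P.E)
    (hxR : x ∈ R) (hx : ¬ P.Spans C {x}) : P.dist R ≤ (R \ C).card := by
  by_contra! hlt
  have hRC : P.Spans (R ∩ C) R := by
    rw [Spans, union_eq_right.2 inter_subset_left, ← sdiff_sdiff_self_left,
      P.rk_sdiff_eq_of_card_lt_dist hR sdiff_subset hlt]
  exact hx ((hRC.mono_left inter_subset_right hC hR).mono_right (singleton_subset_iff.2 hxR)
    (union_subset hC hR))

lemma exists_not_spans_of_rk_lt {X C : Finset α} (hX : X ⊆ P.E) (hC : C ⊆ P.E)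
    (h : P.rk C < P.rk X) : ∃ x ∈ X, ¬ P.Spans C {x} := by
  by_contra! hspan
  have hCX : P.Spans C (X.biUnion singleton) :=
    Spans.biUnion hspan hC fun x hx ↦ singleton_subset_iff.2 (hX hx)
  rw [biUnion_singleton_eq_self] at hCX
  exact (P.rk_mono _ _ subset_union_right (union_subset hC hX)).trans hCX |>.not_gt h

lemma notMem_of_not_spans_singleton {C : Finset α} {x : α} (hx : ¬ P.Spans C {x}) : x ∉ C :=
  fun hxC ↦ hx (by rw [Spans, union_eq_left.2 (singleton_subset_iff.2 hxC)])

lemma exists_subset_sdiff_insert_card_eq {R C : Finset α} {x : α} {e : ℕ} (hR : R ⊆ P.E)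
    (hC : C ⊆ P.E) (hxR : x ∈ R) (he : e < P.dist R) (hx : ¬ P.Spans C {x}) :
    ∃ Y ⊆ R \ insert x C, Y.card = e := by
  refine exists_subset_card_eq ?_
  have := dist_le_card_sdiff_of_not_spans hR hC hxR hx
  rw [sdiff_insert, card_erase_of_mem (mem_sdiff.2 ⟨hxR, notMem_of_not_spans_singleton hx⟩)]
  omega

theorem exists_spans_extension {ι : Type*} [Fintype ι] (c e : ℕ) {S F : Finset α}
    (hS : S ⊆ P.E) (hF : F ⊆ P.E) (hSF : Disjoint S F) (hspan : P.Spans S F) {x : α}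
    (hx : x ∈ P.E) (hxSF : ¬ P.Spans (S ∪ F) {x}) (R : ι → Finset α)
    (hR : ∀ i, R i ⊆ P.E ∧ x ∈ R i ∧ (R i).card ≤ c + e + 1 ∧ e < P.dist (R i))
    (hRR : Pairwise fun i j ↦ R i ∩ R j = {x}) :
    ∃ S' F' : Finset α, S' ⊆ P.E ∧ F' ⊆ P.E ∧ Disjoint S' F' ∧ P.Spans S' F' ∧
      F'.card = F.card + Fintype.card ι * e ∧ S'.card ≤ S.card + 1 + Fintype.card ι * c := by
  choose Y hYsub hYcard using fun i ↦ exists_subset_sdiff_insert_card_eq (hR i).1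
    (union_subset hS hF) (hR i).2.1 (hR i).2.2.2 hxSF
  have hYR : ∀ i, Y i ⊆ R i := fun i ↦ (hYsub i).trans sdiff_subset
  have hYfresh : ∀ i, Disjoint (Y i) (insert x (S ∪ F)) :=
    fun i ↦ disjoint_of_subset_left (hYsub i) sdiff_disjoint
  have hRY : ∀ i j z, z ∈ R i → z ∈ Y j → i = j := by
    intro i j z hzi hzj
    by_contra hij
    have hzx : z = x := mem_singleton.1 (hRR hij ▸ mem_inter.2 ⟨hzi, hYR j hzj⟩)
    exact disjoint_left.1 (hYfresh j) (hzx ▸ hzj) (mem_insert_self x _)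
  have hxY : ∀ i, x ∉ Y i := fun i ↦ disjoint_right.1 (hYfresh i) (mem_insert_self x _)
  set F' := F ∪ univ.biUnion Y
  set S' := (S ∪ insert x (univ.biUnion R)) \ F'
  have hRE : univ.biUnion R ⊆ P.E := biUnion_subset.2 fun i _ ↦ (hR i).1
  have hYE : univ.biUnion Y ⊆ P.E := biUnion_subset.2 fun i _ ↦ (hYR i).trans (hR i).1
  have hS'E : S' ⊆ P.E := sdiff_subset.trans (union_subset hS (insert_subset hx hRE))
  refine ⟨S', F', hS'E, union_subset hF hYE, sdiff_disjoint, ?_,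
    card_union_biUnion_eq (fun i ↦ ((hYfresh i).mono_right (subset_insert x _)).symm.mono_left
      subset_union_right) (fun i j hij ↦ disjoint_left.2 fun z hzi hzj ↦
        hij (hRY i j z (hYR i hzi) hzj)) hYcard,
    card_union_insert_biUnion_sdiff_le S F hYR (fun i ↦ (hR i).2.1) hxY (fun i ↦ (hR i).2.2.1)
      hYcard⟩
  have hSS' : S ⊆ S' := fun z hz ↦ mem_sdiff.2 ⟨mem_union_left _ hz, fun hzF' ↦ by
    rcases mem_union.1 hzF' with hzF | hzY
    · exact disjoint_left.1 hSF hz hzF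
    · obtain ⟨i, -, hzi⟩ := mem_biUnion.1 hzY
      exact disjoint_left.1 (hYfresh i) hzi (mem_insert_of_mem (mem_union_left _ hz))⟩
  have hRS'F : ∀ i, R i \ Y i ⊆ S' ∪ F := by
    intro i z hz
    obtain ⟨hzR, hzY⟩ := mem_sdiff.1 hz
    by_cases hzF : z ∈ F
    · exact mem_union_right _ hzF
    refine mem_union_left _ (mem_sdiff.2 ⟨mem_union_right _ (mem_insert_of_mem
      (mem_biUnion.2 ⟨i, mem_univ i, hzR⟩)), ?_⟩)
    simp only [F', mem_union, mem_biUnion, mem_univ, true_and, not_or, not_exists]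
    exact ⟨hzF, fun j hzj ↦ hzY (hRY i j z hzR hzj ▸ hzj)⟩
  have hS'FE : S' ∪ F ⊆ P.E := union_subset hS'E hF
  refine (hspan.mono_left hSS' hS'E hF).union_of_spans_union (Spans.biUnion (fun i _ ↦ ?_) hS'FE
    fun i _ ↦ (hYR i).trans (hR i).1)
  exact (spans_sdiff_of_card_lt_dist (hR i).1 (hYR i) (by rw [hYcard i]; exact (hR i).2.2.2)
    ).mono_left (hRS'F i) hS'FE ((hYR i).trans (hR i).1)

theorem exists_spans_of_repair_sets {ι : Type*} [Fintype ι]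
    (hcard : ∀ X : Finset α, X ⊆ P.E → P.rk X ≤ (X.card : ℝ)) (c e : ℕ) {X0 : Finset α}
    (hX0E : X0 ⊆ P.E) (hX0rk : P.rk X0 = P.rk P.E)
    (hrep : ∀ x ∈ X0, ∃ R : ι → Finset α,
      (∀ i, R i ⊆ P.E ∧ x ∈ R i ∧ (R i).card ≤ c + e + 1 ∧ e < P.dist (R i)) ∧
      Pairwise fun i j ↦ R i ∩ R j = {x}) :
    ∀ j M : ℕ, M ≤ j * Fintype.card ι → ((j + M * c : ℕ) : ℝ) < P.rk P.E + 1 →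
      ∃ S F : Finset α, S ⊆ P.E ∧ F ⊆ P.E ∧ Disjoint S F ∧ P.Spans S F ∧
        F.card = M * e ∧ S.card ≤ j + M * c := by
  intro j
  induction j with
  | zero =>
    intro M hM _
    obtain rfl : M = 0 := by simpa using hM
    exact ⟨∅, ∅, empty_subset _, empty_subset _, disjoint_empty_left _, by simp [Spans], by simp,
      by simp⟩
  | succ j ih =>
    intro M hM hlt
    obtain ⟨M', u, rfl, hu, hM'⟩ : ∃ M' u, M = M' + u ∧ u ≤ Fintype.card ι ∧
        M' ≤ j * Fintype.card ι :=
      ⟨M - min M (Fintype.card ι), min M (Fintype.card ι), by omega, min_le_right _ _,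
        by rw [Nat.succ_mul] at hM; omega⟩
    have hle : ((j + M' * c : ℕ) : ℝ) + 1 ≤ ((j + 1 + (M' + u) * c : ℕ) : ℝ) := by
      exact_mod_cast (by nlinarith : j + M' * c + 1 ≤ j + 1 + (M' + u) * c)
    obtain ⟨S, F, hS, hF, hSF, hspan, hFcard, hScard⟩ := ih M' hM' (by linarith)
    have hSFlt : P.rk (S ∪ F) < P.rk X0 :=
      calc P.rk (S ∪ F) ≤ P.rk S := hspan
        _ ≤ S.card := hcard S hS
        _ ≤ ((j + M' * c : ℕ) : ℝ) := by exact_mod_cast hScard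
        _ < P.rk X0 := by linarith
    obtain ⟨x, hxX0, hx⟩ := exists_not_spans_of_rk_lt hX0E (union_subset hS hF) hSFlt
    obtain ⟨R, hR, hRR⟩ := hrep x hxX0
    obtain ⟨g⟩ : Nonempty (Fin u ↪ ι) := Function.Embedding.nonempty_of_card_le (by simpa)
    obtain ⟨S', F', hS', hF', hSF', hspan', hF'card, hS'card⟩ :=
      exists_spans_extension c e hS hF hSF hspan (hX0E hxX0) hx (R ∘ g) (fun i ↦ hR (g i))
        (hRR.comp_of_injective g.injective)
    refine ⟨S', F', hS', hF', hSF', hspan', ?_, ?_⟩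
    · rw [hF'card, hFcard, Fintype.card_fin]
      ring
    · rw [Fintype.card_fin] at hS'card
      nlinarith

theorem dist_add_card_le_of_spans (hcard : ∀ X : Finset α, X ⊆ P.E → P.rk X ≤ (X.card : ℝ))
    {S F : Finset α} (hS : S ⊆ P.E) (hF : F ⊆ P.E) (hSF : Disjoint S F) (hspan : P.Spans S F)
    {m : ℕ} (hSm : S.card ≤ m) (hm : (m : ℝ) < P.rk P.E) :
    P.dist P.E + m + F.card ≤ P.E.card := by
  have hSEF : S ⊆ P.E \ F := subset_sdiff.2 ⟨hS, hSF⟩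
  have hmEF : m ≤ (P.E \ F).card := by
    have hEF := hspan.mono_left hSEF sdiff_subset hF
    rw [Spans, sdiff_union_of_subset hF] at hEF
    exact_mod_cast (hm.trans_le (hEF.trans (hcard _ sdiff_subset))).le
  obtain ⟨C, hSC, hCEF, hCm⟩ := exists_subsuperset_card_eq hSEF hSm hmEF
  have hC : C ⊆ P.E := hCEF.trans sdiff_subset
  have hCF : Disjoint C F := disjoint_of_subset_left hCEF sdiff_disjoint
  have hCFE : C ∪ F ⊆ P.E := union_subset hC hF
  have hrk : P.rk (C ∪ F) < P.rk P.E :=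
    calc P.rk (C ∪ F) ≤ P.rk C := hspan.mono_left hSC hC hF
      _ ≤ C.card := hcard C hC
      _ < P.rk P.E := by rwa [hCm]
  have hdist := P.dist_le_card (sdiff_subset : P.E \ (C ∪ F) ⊆ P.E)
    (by rwa [Finset.sdiff_sdiff_eq_self hCFE])
  rw [card_sdiff_of_subset hCFE, card_union_of_disjoint hCF, hCm] at hdist
  have := card_le_card hCFE
  rw [card_union_of_disjoint hCF, hCm] at this
  omega

end PolyMatroid

lemma exists_ceil_div_eq_add_one {p d : ℕ} (hp : 0 < p) (hd : 0 < d) :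
    ∃ N : ℕ, ⌈(p / d : ℚ)⌉ = N + 1 ∧ N * d < p := by
  have hpos : 0 < ⌈(p / d : ℚ)⌉ := Int.ceil_pos.2 (by positivity)
  refine ⟨(⌈(p / d : ℚ)⌉ - 1).toNat, by omega, ?_⟩
  have hlt : ((⌈(p / d : ℚ)⌉ - 1 : ℤ) : ℚ) * d < p := by
    rw [← lt_div_iff₀ (by positivity)]
    push_cast
    linarith [Int.ceil_lt_add_one (p / d : ℚ)]
  have : ((⌈(p / d : ℚ)⌉ - 1).toNat : ℤ) * d < p := by
    rw [Int.toNat_of_nonneg (by omega)]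
    exact_mod_cast hlt
  exact_mod_cast this

lemma mul_le_and_le_sub_mul_of_mul_add_one_le {N t c m : ℕ} (h : N * (t * c + 1) ≤ t * m) :
    N * c ≤ m ∧ N ≤ (m - N * c) * t := by
  rcases Nat.eq_zero_or_pos t with rfl | ht
  · simp_all
  have hNc : N * c ≤ m := Nat.le_of_mul_le_mul_left (by nlinarith) ht
  refine ⟨hNc, ?_⟩
  zify [hNc] at h ⊢
  nlinarith

theorem stmt16_general {α : Type} [DecidableEq α] (P : PolyMatroid α)
    (hcard : ∀ X : Finset α, X ⊆ P.E → P.rk X ≤ (X.card : ℝ))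
    (hnd2 : 2 ≤ P.dist P.E)
    (r δ : ℤ) (t : ℕ) (hr : 1 ≤ r) (hδ : 2 ≤ δ)
    (X0 : Finset α) (hX0E : X0 ⊆ P.E)
    (hX0rk : P.rk X0 = P.rk P.E)
    (hrep : ∀ x ∈ X0, ∃ Rs : Fin t → Finset α,
      (∀ i : Fin t, Rs i ⊆ P.E ∧ x ∈ Rs i ∧ ((Rs i).card : ℤ) ≤ r + δ - 1 ∧
        δ ≤ (P.dist (Rs i) : ℤ)) ∧
      (∀ i j : Fin t, i ≠ j → Rs i ∩ Rs j = {x})) :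
    (P.dist P.E : ℤ) ≤ (P.E.card : ℤ) - ⌈P.rk P.E⌉ + 1 -
      (⌈((t : ℚ) * ((⌈P.rk P.E⌉ : ℚ) - 1) + 1) / ((t : ℚ) * ((r : ℚ) - 1) + 1)⌉ - 1) *
        (δ - 1) := by
  have hk := Int.ceil_pos.2 (P.rk_pos_of_dist_ne_zero (by omega))
  obtain ⟨m, hm⟩ : ∃ m : ℕ, ⌈P.rk P.E⌉ = m + 1 := ⟨(⌈P.rk P.E⌉ - 1).toNat, by omega⟩
  obtain ⟨c, rfl⟩ : ∃ c : ℕ, r = c + 1 := ⟨(r - 1).toNat, by omega⟩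
  obtain ⟨e, rfl⟩ : ∃ e : ℕ, δ = e + 1 := ⟨(δ - 1).toNat, by omega⟩
  obtain ⟨N, hN, hNlt⟩ := exists_ceil_div_eq_add_one (p := t * m + 1) (d := t * c + 1)
    (by omega) (by omega)
  have hNc := mul_le_and_le_sub_mul_of_mul_add_one_le (Nat.lt_succ_iff.1 hNlt)
  have hmk : (m : ℝ) < P.rk P.E := by exact_mod_cast Int.lt_ceil.1 (by omega : (m : ℤ) < _)
  obtain ⟨S, F, hS, hF, hSF, hspan, hFcard, hScard⟩ :=
    P.exists_spans_of_repair_sets hcard c e hX0E hX0rk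
      (fun x hx ↦ (hrep x hx).imp fun R ⟨hR, hRR⟩ ↦ ⟨fun i ↦ by
        obtain ⟨hRE, hxR, hRcard, hRdist⟩ := hR i
        exact ⟨hRE, hxR, by omega, by omega⟩, hRR⟩)
      (m - N * c) N (by simpa using hNc.2) (by rw [Nat.sub_add_cancel hNc.1]; linarith)
  have hbound := P.dist_add_card_le_of_spans hcard hS hF hSF hspan (by omega) hmk
  have ha : ⌈((t : ℚ) * ((⌈P.rk P.E⌉ : ℚ) - 1) + 1) / ((t : ℚ) * (((c + 1 : ℤ) : ℚ) - 1) + 1)⌉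
      = N + 1 := by
    rw [hm, ← hN]
    push_cast
    ring_nf
  rw [ha, hm]
  rw [hFcard] at hbound
  have : ((P.dist P.E + m + N * e : ℕ) : ℤ) ≤ P.E.card := by exact_mod_cast hbound
  push_cast at this ⊢
  linarith

/-- Singleton-type bound for `(n,k,d,r,δ,t)_i`-polymatroids:
`d ≤ n − ⌈k⌉ + 1 − (⌈(t(⌈k⌉−1)+1)/(t(r−1)+1)⌉ − 1)(δ − 1)`. -/
theorem stmt16 {α : Type} [DecidableEq α] (P : PolyMatroid α)
    (hcard : ∀ X : Finset α, X ⊆ P.E → P.rk X ≤ (X.card : ℝ))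
    (hnd1 : ∀ x ∈ P.E, 0 < P.rk {x}) (hnd2 : 2 ≤ P.dist P.E)
    (r δ : ℤ) (t : ℕ) (hr : 1 ≤ r) (hδ : 2 ≤ δ) (ht : 1 ≤ t)
    (X0 : Finset α) (hX0E : X0 ⊆ P.E)
    (hX0rk : P.rk X0 = P.rk P.E) (hX0min : ∀ Y : Finset α, Y ⊂ X0 → P.rk Y < P.rk P.E)
    (hrep : ∀ x ∈ X0, ∃ Rs : Fin t → Finset α,
      (∀ i : Fin t, Rs i ⊆ P.E ∧ x ∈ Rs i ∧ ((Rs i).card : ℤ) ≤ r + δ - 1 ∧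
        δ ≤ (P.dist (Rs i) : ℤ)) ∧
      (∀ i j : Fin t, i ≠ j → Rs i ∩ Rs j = {x})) :
    (P.dist P.E : ℤ) ≤ (P.E.card : ℤ) - ⌈P.rk P.E⌉ + 1 -
      (⌈((t : ℚ) * ((⌈P.rk P.E⌉ : ℚ) - 1) + 1) / ((t : ℚ) * ((r : ℚ) - 1) + 1)⌉ - 1) *
        (δ - 1) :=
  stmt16_general P hcard hnd2 r δ t hr hδ X0 hX0E hX0rk hrep
end

section
/- Let q be a prime power and 𝔽_q the finite field with q elements. Let r ≥ 1 and δ ≥ 2 be integers, let A be an additive subgroup of 𝔽_q with |A| = r + δ − 1, let k be a positive multiple of r, and assume k − 1 + (δ − 1)(k/r − 1) < q. Let g(x) = ∏_{a∈A}(x − a). For a matrix a = (a_{i,j}) ∈ 𝔽_q^{r × (k/r)} (indices 0 ≤ i ≤ r−1, 0 ≤ j ≤ k/r − 1) define the polynomial f_a(x) = Σ_{i=0}^{r−1} Σ_{j=0}^{k/r−1} a_{i,j} g(x)^j x^i, and let C = {(f_a(x))_{x∈𝔽_q} : a ∈ 𝔽_q^{r×(k/r)}} ⊆ 𝔽_q^{𝔽_q}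 be the corresponding evaluation code of length n = q. Then: (i) C is an 𝔽_q-linear subspace of 𝔽_q^{𝔽_q} of dimension k; (ii) the minimum Hamming weight of a nonzero codeword of C is at least n − k + 1 − (δ − 1)(k/r − 1); (iii) for every coset S of A in (𝔽_q, +) and every a, the restriction of the function x ↦ f_a(x) to S coincides with the evaluation of a polynomial of degree at most r − 1; in particular the punctured code C_S = {(f_a(x))_{x∈S} : a} has minimum Hamming distance at least δ. -/
open Polynomial

/-- `g(x) = ∏_{a ∈ A} (x − a)`. -/
noncomputable def gpoly (F : Type) [Field F] [Fintype F] (A : AddSubgroup F)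
    [DecidablePred (· ∈ A)] : Polynomial F :=
  ∏ a ∈ Finset.univ.filter (· ∈ A), (X - C a)

/-- `f_a(x) = Σ_{i<r} Σ_{j<w} a_{i,j} g(x)^j x^i`. -/
noncomputable def fPoly {F : Type} [Field F] [Fintype F] (A : AddSubgroup F)
    [DecidablePred (· ∈ A)] (r w : ℕ) (a : Fin r → Fin w → F) : Polynomial F :=
  ∑ i : Fin r, ∑ j : Fin w, C (a i j) * (gpoly F A) ^ (j : ℕ) * X ^ (i : ℕ)

/-- The evaluation code `C = {(f_a(x))_{x ∈ F} : a}`. -/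
def evCode {F : Type} [Field F] [Fintype F] (A : AddSubgroup F)
    [DecidablePred (· ∈ A)] (r w : ℕ) : Set (F → F) :=
  {v | ∃ a : Fin r → Fin w → F, v = fun x => (fPoly A r w a).eval x}

/-!
Writing `f_a = ∑ⱼ gʲ·pⱼ` with `pⱼ = ∑ᵢ a_{i,j} xⁱ` of degree `< r ≤ deg g = |A|`, uniqueness of
`g`-adic expansions makes `a ↦ f_a` injective, and `deg f_a ≤ (w-1)|A| + r - 1 < q` makes evaluation
on `𝔽_q` injective and bounds the number of zeros of a nonzero codeword. Since `g` is constant on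
each coset `c + A`, there `f_a` agrees with `∑ⱼ g(c)ʲ·pⱼ`, of degree `≤ r - 1`, which has at most
`r - 1` zeros among the `r + δ - 1` points of the coset.
-/

namespace Polynomial

variable {R : Type*}

theorem natDegree_ofFn_le [Semiring R] [DecidableEq R] (n : ℕ) (v : Fin n → R) :
    (ofFn n v).natDegree ≤ n - 1 :=
  natDegree_le_iff_coeff_eq_zero.2 fun _ hi => ofFn_coeff_eq_zero_of_ge v (by omega)

theorem eq_zero_of_sum_pow_mul_eq_zero [CommRing R] {g : R[X]} (hg : g.Monic) :
    ∀ {w : ℕ} {q : Fin w → R[X]}, (∀ j, (q j).degree < g.degree) →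
      ∑ j : Fin w, g ^ (j : ℕ) * q j = 0 → q = 0
  | 0, _, _, _ => Subsingleton.elim _ _
  | w + 1, q, hq, h => by
    have hsplit : q 0 + g * ∑ j : Fin w, g ^ (j : ℕ) * q j.succ = 0 := by
      rw [← h, Fin.sum_univ_succ, Finset.mul_sum]
      simp only [Fin.val_zero, pow_zero, one_mul, Fin.val_succ, pow_succ', mul_assoc]
    obtain ⟨htail, hhead⟩ := div_modByMonic_unique _ _ hg ⟨hsplit, hq 0⟩
    rw [zero_divByMonic] at htail
    rw [zero_modByMonic] at hhead
    have hrest := eq_zero_of_sum_pow_mul_eq_zero hg (fun j => hq j.succ) htail.symm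
    funext j
    exact Fin.cases hhead.symm (fun j => congrFun hrest j) j

theorem card_le_card_filter_eval_ne_zero_add_natDegree [CommRing R] [IsDomain R]
    [DecidableEq R] {p : R[X]} (hp : p ≠ 0) (T : Finset R) :
    T.card ≤ (T.filter fun x => p.eval x ≠ 0).card + p.natDegree := by
  have hroots : (T.filter fun x => p.eval x = 0).card ≤ p.natDegree :=
    card_le_degree_of_subset_roots fun x hx => by
      rw [Finset.mem_val, Finset.mem_filter] at hx
      exact (mem_roots hp).2 hx.2
  have := Finset.card_filter_add_card_filter_not (s := T) (p := fun x => p.eval x = 0)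
  simp only [ne_eq]
  omega

end Polynomial

section TamoBarg

variable {F : Type} [Field F] [Fintype F] (A : AddSubgroup F) [DecidablePred (· ∈ A)]

theorem gpoly_monic : (gpoly F A).Monic :=
  monic_prod_of_monic _ _ fun a _ => monic_X_sub_C a

theorem natDegree_gpoly : (gpoly F A).natDegree = (Finset.univ.filter (· ∈ A)).card := by
  rw [gpoly, natDegree_prod_of_monic _ _ fun a _ => monic_X_sub_C a]
  simp

theorem card_filter_sub_mem (c : F) :
    (Finset.univ.filter fun x => x - c ∈ A).card = (Finset.univ.filter (· ∈ A)).card :=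
  Finset.card_nbij' (· - c) (· + c) (fun x hx => by simpa using hx) (fun x hx => by simpa using hx)
    (fun x _ => by simp) (fun x _ => by simp)

/-- Translation by an element of `A` permutes the roots of `g`. -/
theorem eval_gpoly_eq_of_sub_mem {x c : F} (h : x - c ∈ A) :
    (gpoly F A).eval x = (gpoly F A).eval c := by
  simp only [gpoly, eval_prod, eval_sub, eval_X, eval_C]
  refine Finset.prod_nbij' (· - (x - c)) (· + (x - c)) ?_ ?_ ?_ ?_ ?_
  · simpa using fun a ha => A.sub_mem ha h
  · simpa using fun a ha => A.add_mem ha h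
  all_goals intro a _; ring

variable (r w : ℕ)

noncomputable def fPolyLinearMap : (Fin r → Fin w → F) →ₗ[F] F[X] where
  toFun := fPoly A r w
  map_add' a b := by simp [fPoly, C_add, add_mul, Finset.sum_add_distrib]
  map_smul' c a := by simp [fPoly, C_mul, Finset.mul_sum, mul_assoc, smul_eq_C_mul]

theorem fPoly_eq_sum_gpoly_pow_mul_ofFn [DecidableEq F] (a : Fin r → Fin w → F) :
    fPoly A r w a = ∑ j : Fin w, gpoly F A ^ (j : ℕ) * ofFn r (fun i => a i j) := by
  rw [fPoly, Finset.sum_comm]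
  refine Finset.sum_congr rfl fun j _ => ?_
  rw [ofFn_eq_sum_monomial, Finset.mul_sum]
  refine Finset.sum_congr rfl fun i _ => ?_
  rw [← C_mul_X_pow_eq_monomial]
  ring

theorem natDegree_fPoly_le (a : Fin r → Fin w → F) :
    (fPoly A r w a).natDegree ≤ (w - 1) * (Finset.univ.filter (· ∈ A)).card + (r - 1) := by
  classical
  rw [fPoly_eq_sum_gpoly_pow_mul_ofFn, ← natDegree_gpoly]
  refine natDegree_sum_le_of_forall_le _ _ fun j _ => natDegree_mul_le.trans ?_
  gcongr
  · exact natDegree_pow_le.trans (Nat.mul_le_mul_right _ (by omega))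
  · exact natDegree_ofFn_le r _

theorem fPoly_injective (hrA : r ≤ (Finset.univ.filter (· ∈ A)).card) :
    Function.Injective (fPoly A r w) := by
  classical
  change Function.Injective (fPolyLinearMap A r w)
  rw [← LinearMap.ker_eq_bot, LinearMap.ker_eq_bot']
  intro a ha
  have hdigits := eq_zero_of_sum_pow_mul_eq_zero (gpoly_monic A)
    (q := fun j => ofFn r (fun i => a i j))
    (fun j => (ofFn_degree_lt _).trans_le <| by
      rw [degree_eq_natDegree (gpoly_monic A).ne_zero, natDegree_gpoly]
      exact_mod_cast hrA)
    ((fPoly_eq_sum_gpoly_pow_mul_ofFn A r w a).symm.trans ha)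
  funext i j
  exact congrFun ((map_eq_zero_iff _ (injective_ofFn r)).1 (congrFun hdigits j)) i

theorem exists_natDegree_le_eval_fPoly_eq_on_coset (c : F) (a : Fin r → Fin w → F) :
    ∃ p : F[X], p.natDegree ≤ r - 1 ∧ ∀ x, x - c ∈ A → (fPoly A r w a).eval x = p.eval x := by
  classical
  refine ⟨ofFn r (∑ j : Fin w, (gpoly F A).eval c ^ (j : ℕ) • fun i => a i j),
    natDegree_ofFn_le r _, fun x hx => ?_⟩
  simp only [fPoly_eq_sum_gpoly_pow_mul_ofFn, map_sum, map_smul, eval_finsetSum, eval_smul,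
    eval_mul, eval_pow, eval_gpoly_eq_of_sub_mem A hx, smul_eq_mul]

noncomputable def evalFPolyLinearMap : (Fin r → Fin w → F) →ₗ[F] (F → F) :=
  (LinearMap.pi fun x => leval x) ∘ₗ fPolyLinearMap A r w

theorem evCode_eq_range : evCode A r w = LinearMap.range (evalFPolyLinearMap A r w) := by
  ext v
  simp only [evCode, Set.mem_ofPred_eq, SetLike.mem_coe, LinearMap.mem_range, eq_comm]
  rfl

theorem evalFPolyLinearMap_injective (hrA : r ≤ (Finset.univ.filter (· ∈ A)).card)
    (hdeg : (w - 1) * (Finset.univ.filter (· ∈ A)).card + (r - 1) < Fintype.card F) :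
    Function.Injective (evalFPolyLinearMap A r w) := by
  rw [← LinearMap.ker_eq_bot, LinearMap.ker_eq_bot']
  intro a ha
  refine (injective_iff_map_eq_zero (fPolyLinearMap A r w)).1 (fPoly_injective A r w hrA) a ?_
  exact eq_zero_of_natDegree_lt_card_of_eval_eq_zero _ Function.injective_id
    (fun x => congrFun ha x) ((natDegree_fPoly_le A r w a).trans_lt hdeg)

theorem card_le_hammingNorm_add_of_mem_evCode [DecidableEq F] {v : F → F}
    (hv : v ∈ evCode A r w) (hv0 : v ≠ 0) :
    Fintype.card F ≤ hammingNorm v + ((w - 1) * (Finset.univ.filter (· ∈ A)).card + (r - 1)) := by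
  obtain ⟨a, rfl⟩ := hv
  have hf : fPoly A r w a ≠ 0 := fun h => hv0 (funext fun x => by simp [h])
  exact (card_le_card_filter_eval_ne_zero_add_natDegree hf Finset.univ).trans
    (Nat.add_le_add_left (natDegree_fPoly_le A r w a) _)

theorem card_le_card_filter_ne_on_coset_add [DecidableEq F] (c : F) {u v : F → F}
    (hu : u ∈ evCode A r w) (hv : v ∈ evCode A r w) (hne : ∃ x, x - c ∈ A ∧ u x ≠ v x) :
    (Finset.univ.filter (· ∈ A)).card ≤
      (Finset.univ.filter fun x => x - c ∈ A ∧ u x ≠ v x).card + (r - 1) := by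
  obtain ⟨a, rfl⟩ := hu
  obtain ⟨b, rfl⟩ := hv
  obtain ⟨p, hpdeg, hp⟩ := exists_natDegree_le_eval_fPoly_eq_on_coset A r w c (a - b)
  have hsub : ∀ x, x - c ∈ A → p.eval x = (fPoly A r w a).eval x - (fPoly A r w b).eval x := by
    intro x hx
    rw [← hp x hx, ← eval_sub]
    exact congrArg (eval x) (map_sub (fPolyLinearMap A r w) a b)
  have hp0 : p ≠ 0 := by
    rintro rfl
    obtain ⟨x, hx, hxne⟩ := hne
    exact hxne (sub_eq_zero.1 (by simpa using (hsub x hx).symm))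
  have hfilter : (Finset.univ.filter fun x => x - c ∈ A ∧
        (fPoly A r w a).eval x ≠ (fPoly A r w b).eval x) =
      (Finset.univ.filter fun x => x - c ∈ A).filter fun x => p.eval x ≠ 0 := by
    rw [Finset.filter_filter]
    exact Finset.filter_congr fun x _ => and_congr_right fun hx => by rw [hsub x hx, sub_ne_zero]
  rw [hfilter, ← card_filter_sub_mem A c]
  exact (card_le_card_filter_eval_ne_zero_add_natDegree hp0 _).trans (by omega)

end TamoBarg

/-- The Tamo–Barg evaluation LRC: dimension `k`, minimum distance at least
`n − k + 1 − (δ−1)(k/r − 1)`, and `(r, δ)`-locality on the cosets of `A`. -/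
theorem stmt18 {F : Type} [Field F] [Fintype F] [DecidableEq F]
    (r δ w : ℕ) (hr : 1 ≤ r) (hδ : 2 ≤ δ) (hw : 1 ≤ w)
    (A : AddSubgroup F) [DecidablePred (· ∈ A)]
    (hA : (Finset.univ.filter (· ∈ A)).card = r + δ - 1)
    (k : ℕ) (hk : k = r * w)
    (hq : (k : ℤ) - 1 + ((δ : ℤ) - 1) * ((w : ℤ) - 1) < (Fintype.card F : ℤ)) :
    (∃ S : Submodule F (F → F), (S : Set (F → F)) = evCode A r w ∧
      Module.finrank F S = k) ∧
    (∀ v ∈ evCode A r w, v ≠ (0 : F → F) →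
      (Fintype.card F : ℤ) - (k : ℤ) + 1 - ((δ : ℤ) - 1) * ((w : ℤ) - 1) ≤
        (hammingNorm v : ℤ)) ∧
    (∀ c : F,
      (∀ a : Fin r → Fin w → F, ∃ p : Polynomial F, p.natDegree ≤ r - 1 ∧
        ∀ x : F, x - c ∈ A → (fPoly A r w a).eval x = p.eval x) ∧
      (∀ u ∈ evCode A r w, ∀ v ∈ evCode A r w, (∃ x : F, x - c ∈ A ∧ u x ≠ v x) →
        δ ≤ (Finset.univ.filter fun x : F => x - c ∈ A ∧ u x ≠ v x).card)) := by
  have hrA : r ≤ (Finset.univ.filter (· ∈ A)).card := by omega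
  have hdeg : (((w - 1) * (Finset.univ.filter (· ∈ A)).card + (r - 1) : ℕ) : ℤ) =
      k - 1 + (δ - 1) * (w - 1) := by
    rw [hA, hk]
    push_cast [Nat.cast_sub hr, Nat.cast_sub hw, Nat.cast_sub (by omega : 1 ≤ r + δ)]
    ring
  have hdeg_lt : (w - 1) * (Finset.univ.filter (· ∈ A)).card + (r - 1) < Fintype.card F := by
    exact_mod_cast hdeg ▸ hq
  refine ⟨⟨_, (evCode_eq_range A r w).symm, ?_⟩, ?_,
    fun c => ⟨exists_natDegree_le_eval_fPoly_eq_on_coset A r w c, fun u hu v hv hne => ?_⟩⟩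
  · rw [LinearMap.finrank_range_of_inj (evalFPolyLinearMap_injective A r w hrA hdeg_lt)]
    simp [hk, Module.finrank_pi_fintype]
  · intro v hv hv0
    have hcard : (Fintype.card F : ℤ) ≤ hammingNorm v +
        (((w - 1) * (Finset.univ.filter (· ∈ A)).card + (r - 1) : ℕ) : ℤ) := by
      exact_mod_cast card_le_hammingNorm_add_of_mem_evCode A r w hv hv0
    linarith
  · have := card_le_card_filter_ne_on_coset_add A r w c hu hv hne
    omega
end

section
/- Let M be a matroid on a finite ground set E. Then M is representable over 𝔽₂ (i.e., there is a family of vectors (v_e)_{e∈E} in some 𝔽₂-vector space such that a set I ⊆ E is independent in M if and only if the family (v_e)_{e∈I} is linearly independent over 𝔽₂) if and only if M has no minor isomorphic to the uniform matroid U₄² of rank 2 on 4 elements; that is, if and only if there are no sets X ⊆ Y ⊆ E such that the matroid (M|Y)/X, obtained from M by restriction to Y followed by contraction of X, is isomorphic to U₄². -/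
/-- A matroid given by an integer-valued rank function on subsets of a finite ground set. -/
structure RankMatroid (α : Type) [DecidableEq α] where
  E : Finset α
  rk : Finset α → ℤ
  rk_nonneg : ∀ X : Finset α, X ⊆ E → 0 ≤ rk X
  rk_le_card : ∀ X : Finset α, X ⊆ E → rk X ≤ X.card
  rk_mono : ∀ X Y : Finset α, X ⊆ Y → Y ⊆ E → rk X ≤ rk Y
  rk_submod : ∀ X Y : Finset α, X ⊆ E → Y ⊆ E → rk (X ∪ Y) + rk (X ∩ Y) ≤ rk X + rk Y

namespace RankMatroid

variable {α : Type} [DecidableEq α]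

/-- The minimum distance `d_X` of the restriction to `X`:
`d_X = min {|Y| : Y ⊆ X, ρ(X \ Y) < ρ(X)}`. -/
noncomputable def dist (M : RankMatroid α) (X : Finset α) : ℕ :=
  sInf {m : ℕ | ∃ Y : Finset α, Y ⊆ X ∧ Y.card = m ∧ M.rk (X \ Y) < M.rk X}

/-- Closure: `cl(X) = {y ∈ E : ρ(X ∪ {y}) = ρ(X)}`. -/
def cl (M : RankMatroid α) (X : Finset α) : Finset α :=
  M.E.filter fun y => M.rk (insert y X) = M.rk X

/-- `X` is cyclic if `ρ(X \ {x}) = ρ(X)` for every `x ∈ X`. -/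
def Cyclic (M : RankMatroid α) (X : Finset α) : Prop :=
  ∀ x ∈ X, M.rk (X.erase x) = M.rk X

/-- Cyclic core: `cyc(X) = {x ∈ X : ρ(X \ {x}) = ρ(X)}`. -/
def cyc (M : RankMatroid α) (X : Finset α) : Finset α :=
  X.filter fun x => M.rk (X.erase x) = M.rk X

/-- A cyclic flat is a set which is both cyclic and a flat. -/
def IsCyclicFlat (M : RankMatroid α) (X : Finset α) : Prop :=
  X ⊆ M.E ∧ M.Cyclic X ∧ M.cl X = X

/-- `Z(M)`: the collection of cyclic flats of `M`. -/
def Z (M : RankMatroid α) : Set (Finset α) := {X | M.IsCyclicFlat X}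

/-- `M` is non-degenerate: every singleton has rank at least one and `d ≥ 2`. -/
def NonDegenerate (M : RankMatroid α) : Prop :=
  (∀ x ∈ M.E, 1 ≤ M.rk {x}) ∧ 2 ≤ M.dist M.E

/-- `R` is a repair set for `x` with parameters `(r, δ)`. -/
def IsRepairSet (M : RankMatroid α) (r δ : ℤ) (x : α) (R : Finset α) : Prop :=
  R ⊆ M.E ∧ x ∈ R ∧ (R.card : ℤ) ≤ r + δ - 1 ∧ δ ≤ (M.dist R : ℤ)

/-- The collection of cyclic flats of the restriction `M|X`. -/
def ZIn (M : RankMatroid α) (X : Finset α) : Set (Finset α) :=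
  {Y | Y ⊆ X ∧ M.Cyclic Y ∧ X.filter (fun z => M.rk (insert z Y) = M.rk Y) = Y}

/-- `FX` is the meet, in the lattice `(Z(M), ⊆)`, of all cyclic flats containing `X`. -/
def IsMeetOfFlatsContaining (M : RankMatroid α) (X FX : Finset α) : Prop :=
  FX ∈ M.Z ∧ (∀ F ∈ M.Z, X ⊆ F → FX ⊆ F) ∧
    ∀ W ∈ M.Z, (∀ F ∈ M.Z, X ⊆ F → W ⊆ F) → W ⊆ FX

end RankMatroid


/-- `M` is representable over `𝔽₂`. -/
def RepresentableF2 {α : Type} [DecidableEq α] (M : RankMatroid α) : Prop :=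
  ∃ (W : Type), ∃ (_ : AddCommGroup W), ∃ (_ : Module (ZMod 2) W), ∃ v : α → W,
    ∀ I : Finset α, I ⊆ M.E →
      (M.rk I = (I.card : ℤ) ↔
        LinearIndependent (ZMod 2) (fun i : {a // a ∈ I} => v i.1))

namespace TutteAux

variable {α : Type} [DecidableEq α]

open Finset

def Indep (M : RankMatroid α) (I : Finset α) : Prop :=
  I ⊆ M.E ∧ M.rk I = (I.card : ℤ)

def IsCirc (M : RankMatroid α) (C : Finset α) : Prop :=
  C ⊆ M.E ∧ M.rk C < (C.card : ℤ) ∧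
    ∀ x ∈ C, M.rk (C.erase x) = ((C.erase x).card : ℤ)

variable {M : RankMatroid α}

lemma rk_empty (M : RankMatroid α) : M.rk ∅ = 0 := by
  have h1 := M.rk_le_card ∅ (Finset.empty_subset _)
  have h2 := M.rk_nonneg ∅ (Finset.empty_subset _)
  simp at h1; omega

lemma rk_insert_le {X : Finset α} {x : α} (hX : X ⊆ M.E) (hx : x ∈ M.E) :
    M.rk (insert x X) ≤ M.rk X + 1 := by
  have hs : ({x} : Finset α) ⊆ M.E := by simpa using hx
  have h := M.rk_submod {x} X hs hX
  have h1 : M.rk {x} ≤ 1 := by simpa using M.rk_le_card {x} hs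
  have h2 : 0 ≤ M.rk ({x} ∩ X) :=
    M.rk_nonneg _ (Finset.Subset.trans (Finset.inter_subset_left) hs)
  have hins : ({x} : Finset α) ∪ X = insert x X := by
    rw [Finset.insert_eq]
  rw [hins] at h
  linarith

lemma rk_insert_ge {X : Finset α} {x : α} (hX : insert x X ⊆ M.E) :
    M.rk X ≤ M.rk (insert x X) :=
  M.rk_mono _ _ (Finset.subset_insert _ _) hX

lemma rk_union_le_card {X : Finset α} (hX : X ⊆ M.E) :
    ∀ S : Finset α, S ⊆ M.E → M.rk (X ∪ S) ≤ M.rk X + S.card := by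
  intro S
  induction S using Finset.induction_on with
  | empty => intro _; simp
  | @insert a S ha ih =>
    intro hs
    have haE : a ∈ M.E := hs (Finset.mem_insert_self _ _)
    have hSE : S ⊆ M.E := fun y hy => hs (Finset.mem_insert_of_mem hy)
    have h1 : X ∪ insert a S = insert a (X ∪ S) := Finset.union_insert _ _ _
    have h2 : M.rk (insert a (X ∪ S)) ≤ M.rk (X ∪ S) + 1 :=
      rk_insert_le (Finset.union_subset hX hSE) haE
    have h3 := ih hSE
    rw [h1, Finset.card_insert_of_notMem ha]
    push_cast
    linarith

/-- closure monotonicity: if `x` is spanned by `Q` it is spanned by any `Q' ⊇ Q`. -/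
lemma rk_insert_eq_of_subset {Q Q' : Finset α} {x : α} (hQ' : Q' ⊆ M.E) (hx : x ∈ M.E)
    (hQQ : Q ⊆ Q') (h : M.rk (insert x Q) = M.rk Q) :
    M.rk (insert x Q') = M.rk Q' := by
  have hQE : Q ⊆ M.E := hQQ.trans hQ'
  have hxQE : insert x Q ⊆ M.E := Finset.insert_subset hx hQE
  have hsub := M.rk_submod (insert x Q) Q' hxQE hQ'
  have hu : insert x Q ∪ Q' = insert x Q' := by
    rw [Finset.insert_union, Finset.union_eq_right.mpr hQQ]
  have hi : Q ⊆ insert x Q ∩ Q' :=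
    Finset.subset_inter (Finset.subset_insert _ _) hQQ
  have hi2 : M.rk Q ≤ M.rk (insert x Q ∩ Q') :=
    M.rk_mono _ _ hi (Finset.Subset.trans (Finset.inter_subset_right) hQ')
  rw [hu] at hsub
  have hge : M.rk Q' ≤ M.rk (insert x Q') :=
    rk_insert_ge (Finset.insert_subset hx hQ')
  linarith

lemma rk_union_eq_self {X : Finset α} (hX : X ⊆ M.E) :
    ∀ S : Finset α, S ⊆ M.E → (∀ y ∈ S, M.rk (insert y X) = M.rk X) →
      M.rk (X ∪ S) = M.rk X := by
  intro S
  induction S using Finset.induction_on with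
  | empty => intro _ _; simp
  | @insert a S ha ih =>
    intro hs hsp
    have haE : a ∈ M.E := hs (Finset.mem_insert_self _ _)
    have hSE : S ⊆ M.E := fun y hy => hs (Finset.mem_insert_of_mem hy)
    have h1 : X ∪ insert a S = insert a (X ∪ S) := Finset.union_insert _ _ _
    have h2 : M.rk (X ∪ S) = M.rk X := ih hSE (fun y hy => hsp y (Finset.mem_insert_of_mem hy))
    rw [h1]
    have h3 : M.rk (insert a (X ∪ S)) = M.rk (X ∪ S) :=
      rk_insert_eq_of_subset (Finset.union_subset hX hSE) haE
        (Finset.subset_union_left) (hsp a (Finset.mem_insert_self _ _))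
    rw [h3, h2]

lemma indep_subset {I J : Finset α} (hI : Indep M I) (hJI : J ⊆ I) : Indep M J := by
  obtain ⟨hIE, hIrk⟩ := hI
  have hJE : J ⊆ M.E := hJI.trans hIE
  have h1 : M.rk I ≤ M.rk J + (I \ J).card :=
    (by rw [Finset.union_sdiff_of_subset hJI] : M.rk (J ∪ (I \ J)) = M.rk I) ▸
      rk_union_le_card hJE (I \ J) ((Finset.sdiff_subset).trans hIE)
  have h2 : M.rk J ≤ (J.card : ℤ) := M.rk_le_card _ hJE
  have h3 : (I.card : ℤ) = J.card + (I \ J).card := by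
    rw [Finset.card_sdiff_of_subset hJI]
    have := Finset.card_le_card hJI
    omega
  exact ⟨hJE, by linarith⟩

lemma exists_basis_of {X : Finset α} (hX : X ⊆ M.E) :
    ∃ J, J ⊆ X ∧ M.rk J = (J.card : ℤ) ∧ M.rk J = M.rk X := by
  classical
  set s : Finset (Finset α) := X.powerset.filter (fun J => M.rk J = (J.card : ℤ)) with hs
  have hne : s.Nonempty := ⟨∅, by simp [hs, rk_empty]⟩
  obtain ⟨J, hJs, hJmax⟩ := Finset.exists_max_image s (fun J => J.card) hne
  rw [hs, Finset.mem_filter, Finset.mem_powerset] at hJs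
  obtain ⟨hJX, hJrk⟩ := hJs
  refine ⟨J, hJX, hJrk, ?_⟩
  have hspan : ∀ y ∈ X, M.rk (insert y J) = M.rk J := by
    intro y hy
    by_cases hyJ : y ∈ J
    · rw [Finset.insert_eq_self.mpr hyJ]
    · have hins : insert y J ⊆ M.E := Finset.insert_subset (hX hy) (hJX.trans hX)
      have hle : M.rk (insert y J) ≤ M.rk J + 1 := rk_insert_le (hJX.trans hX) (hX hy)
      have hge : M.rk J ≤ M.rk (insert y J) := rk_insert_ge hins
      rcases lt_or_eq_of_le hge with hlt | heq
      · exfalso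
        have hcard : ((insert y J).card : ℤ) = J.card + 1 := by
          rw [Finset.card_insert_of_notMem hyJ]; push_cast; ring
        have hrk : M.rk (insert y J) = ((insert y J).card : ℤ) := by
          have := M.rk_le_card _ hins
          rw [hJrk] at hlt hle
          omega
        have : insert y J ∈ s := by
          rw [hs, Finset.mem_filter, Finset.mem_powerset]
          exact ⟨Finset.insert_subset hy hJX, hrk⟩
        have := hJmax _ this
        have := Finset.card_insert_of_notMem hyJ
        omega
      · exact heq.symm
  have := rk_union_eq_self (hJX.trans hX) X hX hspan
  rw [Finset.union_eq_right.mpr hJX] at this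
  exact this.symm

lemma dep_contains_circ :
    ∀ n (X : Finset α), X.card = n → X ⊆ M.E → M.rk X < (X.card : ℤ) →
      ∃ C, C ⊆ X ∧ IsCirc M C := by
  intro n
  induction n using Nat.strong_induction_on with
  | _ n ih =>
    intro X hcard hXE hdep
    by_cases hc : ∀ x ∈ X, M.rk (X.erase x) = ((X.erase x).card : ℤ)
    · exact ⟨X, Finset.Subset.refl _, hXE, hdep, hc⟩
    · push_neg at hc
      obtain ⟨x, hx, hxne⟩ := hc
      have herase : X.erase x ⊆ M.E := (Finset.erase_subset _ _).trans hXE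
      have hlt : M.rk (X.erase x) < ((X.erase x).card : ℤ) :=
        lt_of_le_of_ne (M.rk_le_card _ herase) hxne
      have hcardlt : (X.erase x).card < n := by
        rw [← hcard]; exact Finset.card_erase_lt_of_mem hx
      obtain ⟨C, hC1, hC2⟩ := ih _ hcardlt (X.erase x) rfl herase hlt
      exact ⟨C, hC1.trans (Finset.erase_subset _ _), hC2⟩

lemma circ_nonempty {C : Finset α} (hC : IsCirc M C) : C.Nonempty := by
  rcases Finset.eq_empty_or_nonempty C with h | h
  · exfalso; have := hC.2.1; rw [h] at this; simp [rk_empty] at this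
  · exact h

lemma circ_rk {C : Finset α} (hC : IsCirc M C) : M.rk C = (C.card : ℤ) - 1 := by
  obtain ⟨x, hx⟩ := circ_nonempty hC
  have h1 : M.rk (C.erase x) ≤ M.rk C :=
    M.rk_mono _ _ (Finset.erase_subset _ _) hC.1
  have h2 := hC.2.2 x hx
  have h3 : ((C.erase x).card : ℤ) = (C.card : ℤ) - 1 := by
    rw [Finset.card_erase_of_mem hx]
    have : 1 ≤ C.card := Finset.card_pos.mpr ⟨x, hx⟩
    omega
  have h4 := hC.2.1
  omega

lemma circ_ssubset_indep {C S : Finset α} (hC : IsCirc M C) (hS : S ⊂ C) : Indep M S := by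
  obtain ⟨x, hxC, hxS⟩ := Finset.exists_of_ssubset hS
  have h1 : S ⊆ C.erase x := fun y hy =>
    Finset.mem_erase.mpr ⟨fun h => hxS (h ▸ hy), hS.1 hy⟩
  have h2 : Indep M (C.erase x) :=
    ⟨(Finset.erase_subset _ _).trans hC.1, hC.2.2 x hxC⟩
  exact indep_subset h2 h1

lemma circ_not_indep {C : Finset α} (hC : IsCirc M C) : ¬ Indep M C := by
  intro h; have := h.2; have := hC.2.1; omega

lemma circ_subset_circ {C₁ C₂ : Finset α} (h₁ : IsCirc M C₁) (h₂ : IsCirc M C₂)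
    (h : C₁ ⊆ C₂) : C₁ = C₂ := by
  by_cases heq : C₁ = C₂
  · exact heq
  · exact absurd (circ_ssubset_indep h₂ (lt_of_le_of_ne h heq)) (circ_not_indep h₁)

lemma circ_union_rk {C₁ C₂ : Finset α} (h₁ : IsCirc M C₁) (h₂ : IsCirc M C₂)
    (hne : C₁ ≠ C₂) : M.rk (C₁ ∪ C₂) ≤ ((C₁ ∪ C₂).card : ℤ) - 2 := by
  have hint : C₁ ∩ C₂ ⊂ C₁ := by
    refine lt_of_le_of_ne Finset.inter_subset_left (fun heq => ?_)
    have : C₁ ⊆ C₂ := by rw [← heq]; exact Finset.inter_subset_right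
    exact hne (circ_subset_circ h₁ h₂ this)
  have hindep : Indep M (C₁ ∩ C₂) := circ_ssubset_indep h₁ hint
  have hsub := M.rk_submod C₁ C₂ h₁.1 h₂.1
  have hr₁ := circ_rk h₁
  have hr₂ := circ_rk h₂
  have hcard := Finset.card_union_add_card_inter C₁ C₂
  have hic := hindep.2
  have hcast : ((C₁ ∪ C₂).card : ℤ) + ((C₁ ∩ C₂).card : ℤ) = (C₁.card : ℤ) + (C₂.card : ℤ) := by
    exact_mod_cast hcard
  omega

lemma unique_circ {S : Finset α} (hS : S ⊆ M.E) (h : M.rk S = (S.card : ℤ) - 1) :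
    ∃ C, (C ⊆ S ∧ IsCirc M C) ∧ ∀ C', C' ⊆ S → IsCirc M C' → C' = C := by
  obtain ⟨C, hCS, hC⟩ := dep_contains_circ S.card S rfl hS (by omega)
  refine ⟨C, ⟨hCS, hC⟩, ?_⟩
  intro C' hC'S hC'
  by_contra hne
  have hU : C' ∪ C ⊆ S := Finset.union_subset hC'S hCS
  have h1 : M.rk (C' ∪ C) ≤ ((C' ∪ C).card : ℤ) - 2 := circ_union_rk hC' hC hne
  have h2 : M.rk S ≤ M.rk (C' ∪ C) + (S \ (C' ∪ C)).card := by
    have := rk_union_le_card (hU.trans hS) (S \ (C' ∪ C)) ((Finset.sdiff_subset).trans hS)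
    rwa [Finset.union_sdiff_of_subset hU] at this
  have h3 : (S.card : ℤ) = ((C' ∪ C).card : ℤ) + ((S \ (C' ∪ C)).card : ℤ) := by
    rw [Finset.card_sdiff_of_subset hU]
    have := Finset.card_le_card hU
    omega
  omega

lemma exists_circ_through {S : Finset α} {v : α} (hS : S ⊆ M.E) (hv : v ∈ S)
    (h : M.rk (S.erase v) = M.rk S) :
    ∃ C, IsCirc M C ∧ v ∈ C ∧ C ⊆ S := by
  obtain ⟨J, hJS, hJrk, hJr⟩ := exists_basis_of ((Finset.erase_subset _ _).trans hS : S.erase v ⊆ M.E)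
  have hvJ : v ∉ J := fun hvJ => (Finset.mem_erase.mp (hJS hvJ)).1 rfl
  have hKS : insert v J ⊆ S := Finset.insert_subset hv (hJS.trans (Finset.erase_subset _ _))
  have hrkK : M.rk (insert v J) ≤ M.rk S := M.rk_mono _ _ hKS hS
  have hdep : M.rk (insert v J) < ((insert v J).card : ℤ) := by
    rw [Finset.card_insert_of_notMem hvJ]
    have : M.rk S = (J.card : ℤ) := by rw [← h, ← hJr, hJrk]
    omega
  obtain ⟨C, hCK, hC⟩ := dep_contains_circ _ (insert v J) rfl (hKS.trans hS) hdep
  refine ⟨C, hC, ?_, hCK.trans hKS⟩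
  by_contra hvC
  have : C ⊆ J := fun y hy => by
    rcases Finset.mem_insert.mp (hCK hy) with h' | h'
    · exact absurd (h' ▸ hy) hvC
    · exact h'
  exact circ_not_indep hC (indep_subset ⟨hJS.trans ((Finset.erase_subset _ _).trans hS), hJrk⟩ this)

end TutteAux

namespace TutteAux

variable {α : Type} [DecidableEq α] {M : RankMatroid α}

open Finset

lemma strong_elim {C₁ C₂ : Finset α} {u v : α} (h₁ : IsCirc M C₁) (h₂ : IsCirc M C₂)
    (hu₁ : u ∈ C₁) (hu₂ : u ∈ C₂) (hv₁ : v ∈ C₁) (hv₂ : v ∉ C₂) :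
    ∃ C₃, IsCirc M C₃ ∧ v ∈ C₃ ∧ C₃ ⊆ (C₁ ∪ C₂).erase u := by
  set T := C₁ ∪ C₂ with hT
  have hTE : T ⊆ M.E := Finset.union_subset h₁.1 h₂.1
  have huv : u ≠ v := fun h => hv₂ (h ▸ hu₂)
  have huT : u ∈ T := Finset.mem_union_left _ hu₁
  have hvT : v ∈ T := Finset.mem_union_left _ hv₁
  -- u is spanned by C₂.erase u
  have hspan_u : M.rk (insert u (C₂.erase u)) = M.rk (C₂.erase u) := by
    rw [Finset.insert_erase hu₂, circ_rk h₂, h₂.2.2 u hu₂, Finset.card_erase_of_mem hu₂]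
    have : 1 ≤ C₂.card := Finset.card_pos.mpr ⟨u, hu₂⟩
    omega
  have hspan_v : M.rk (insert v (C₁.erase v)) = M.rk (C₁.erase v) := by
    rw [Finset.insert_erase hv₁, circ_rk h₁, h₁.2.2 v hv₁, Finset.card_erase_of_mem hv₁]
    have : 1 ≤ C₁.card := Finset.card_pos.mpr ⟨v, hv₁⟩
    omega
  -- rk (T.erase u) = rk T
  have h_Tu : M.rk (T.erase u) = M.rk T := by
    have := rk_insert_eq_of_subset ((Finset.erase_subset _ _).trans hTE) (h₂.1 hu₂)
      (fun y hy => Finset.mem_erase.mpr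
        ⟨(Finset.mem_erase.mp hy).1, Finset.mem_union_right _ (Finset.mem_of_mem_erase hy)⟩)
      hspan_u
    rw [Finset.insert_erase huT] at this
    exact this.symm
  have h_Tv : M.rk (T.erase v) = M.rk T := by
    have := rk_insert_eq_of_subset ((Finset.erase_subset _ _).trans hTE) (h₁.1 hv₁)
      (fun y hy => Finset.mem_erase.mpr
        ⟨(Finset.mem_erase.mp hy).1, Finset.mem_union_left _ (Finset.mem_of_mem_erase hy)⟩)
      hspan_v
    rw [Finset.insert_erase hvT] at this
    exact this.symm
  have hRE : (T.erase u).erase v ⊆ M.E := ((Finset.erase_subset _ _).trans ((Finset.erase_subset _ _).trans hTE))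
  have hC₂R : C₂.erase u ⊆ (T.erase u).erase v := by
    intro y hy
    obtain ⟨hyu, hyC₂⟩ := Finset.mem_erase.mp hy
    exact Finset.mem_erase.mpr ⟨fun h => hv₂ (h ▸ hyC₂), Finset.mem_erase.mpr ⟨hyu, Finset.mem_union_right _ hyC₂⟩⟩
  have h_R : M.rk (insert u ((T.erase u).erase v)) = M.rk ((T.erase u).erase v) :=
    rk_insert_eq_of_subset hRE (h₂.1 hu₂) hC₂R hspan_u
  have hins : insert u ((T.erase u).erase v) = T.erase v := by
    ext y
    simp only [Finset.mem_insert, Finset.mem_erase]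
    constructor
    · rintro (rfl | ⟨hyv, hyu, hyT⟩)
      · exact ⟨huv, huT⟩
      · exact ⟨hyv, hyT⟩
    · rintro ⟨hyv, hyT⟩
      by_cases hyu : y = u
      · exact Or.inl hyu
      · exact Or.inr ⟨hyv, hyu, hyT⟩
  rw [hins] at h_R
  have hvS : v ∈ T.erase u := Finset.mem_erase.mpr ⟨fun h => huv h.symm, hvT⟩
  have hrk : M.rk ((T.erase u).erase v) = M.rk (T.erase u) := by
    rw [← h_R, h_Tv, h_Tu]
  exact exists_circ_through ((Finset.erase_subset _ _).trans hTE) hvS hrk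

def IsBasis (M : RankMatroid α) (B : Finset α) : Prop :=
  B ⊆ M.E ∧ M.rk B = (B.card : ℤ) ∧ M.rk B = M.rk M.E

lemma exists_basis (M : RankMatroid α) : ∃ B, IsBasis M B := by
  obtain ⟨J, hJ, h1, h2⟩ := exists_basis_of (Finset.Subset.refl M.E)
  exact ⟨J, hJ, h1, h2⟩

lemma basis_indep {B S : Finset α} (hB : IsBasis M B) (hS : S ⊆ B) : Indep M S :=
  indep_subset ⟨hB.1, hB.2.1⟩ hS

lemma rk_insert_basis {B : Finset α} {e : α} (hB : IsBasis M B) (he : e ∈ M.E) (heB : e ∉ B) :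
    M.rk (insert e B) = ((insert e B).card : ℤ) - 1 := by
  have h1 : M.rk (insert e B) ≤ M.rk M.E :=
    M.rk_mono _ _ (Finset.insert_subset he hB.1) (Finset.Subset.refl _)
  have h2 : M.rk B ≤ M.rk (insert e B) := rk_insert_ge (Finset.insert_subset he hB.1)
  rw [Finset.card_insert_of_notMem heB]
  have := hB.2.1; have := hB.2.2
  push_cast
  omega

open Classical in
noncomputable def fundC (M : RankMatroid α) (B : Finset α) (e : α) : Finset α :=
  if h : ∃ C, (C ⊆ insert e B ∧ IsCirc M C) ∧ ∀ C', C' ⊆ insert e B → IsCirc M C' → C' = C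
  then h.choose else ∅

lemma fundC_spec {B : Finset α} {e : α} (hB : IsBasis M B) (he : e ∈ M.E) (heB : e ∉ B) :
    (fundC M B e ⊆ insert e B ∧ IsCirc M (fundC M B e)) ∧
      ∀ C', C' ⊆ insert e B → IsCirc M C' → C' = fundC M B e := by
  have hex := unique_circ (Finset.insert_subset he hB.1) (rk_insert_basis hB he heB)
  rw [fundC, dif_pos hex]
  exact hex.choose_spec

lemma fundC_circ {B : Finset α} {e : α} (hB : IsBasis M B) (he : e ∈ M.E) (heB : e ∉ B) :
    IsCirc M (fundC M B e) := (fundC_spec hB he heB).1.2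

lemma fundC_subset {B : Finset α} {e : α} (hB : IsBasis M B) (he : e ∈ M.E) (heB : e ∉ B) :
    fundC M B e ⊆ insert e B := (fundC_spec hB he heB).1.1

lemma fundC_unique {B : Finset α} {e : α} {C : Finset α} (hB : IsBasis M B) (he : e ∈ M.E)
    (heB : e ∉ B) (hC : IsCirc M C) (hCs : C ⊆ insert e B) : C = fundC M B e :=
  (fundC_spec hB he heB).2 C hCs hC

lemma mem_fundC {B : Finset α} {e : α} (hB : IsBasis M B) (he : e ∈ M.E) (heB : e ∉ B) :
    e ∈ fundC M B e := by
  by_contra h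
  have hsub : fundC M B e ⊆ B := fun y hy => by
    rcases Finset.mem_insert.mp (fundC_subset hB he heB hy) with h' | h'
    · exact absurd (h' ▸ hy) h
    · exact h'
  exact circ_not_indep (fundC_circ hB he heB) (basis_indep hB hsub)

lemma pivot_basis {B : Finset α} {e f : α} (hB : IsBasis M B) (he : e ∈ M.E) (heB : e ∉ B)
    (hf : f ∈ fundC M B e) (hfe : f ≠ e) : IsBasis M (insert e (B.erase f)) := by
  have hfB : f ∈ B := by
    rcases Finset.mem_insert.mp (fundC_subset hB he heB hf) with h' | h'
    · exact absurd h' hfe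
    · exact h'
  set B' := insert e (B.erase f) with hB'
  have hB'E : B' ⊆ M.E := Finset.insert_subset he ((Finset.erase_subset _ _).trans hB.1)
  have hcard : B'.card = B.card := by
    rw [hB', Finset.card_insert_of_notMem (fun h => heB (Finset.mem_of_mem_erase h)),
      Finset.card_erase_of_mem hfB]
    have : 1 ≤ B.card := Finset.card_pos.mpr ⟨f, hfB⟩
    omega
  have hindep : M.rk B' = (B'.card : ℤ) := by
    by_contra hne
    have hdep : M.rk B' < (B'.card : ℤ) := lt_of_le_of_ne (M.rk_le_card _ hB'E) hne
    obtain ⟨C, hCB', hC⟩ := dep_contains_circ _ B' rfl hB'E hdep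
    have hCins : C ⊆ insert e B := hCB'.trans
      (Finset.insert_subset_insert _ (Finset.erase_subset _ _))
    have := fundC_unique hB he heB hC hCins
    have hfC : f ∈ C := this ▸ hf
    have : f ∈ B' := hCB' hfC
    rcases Finset.mem_insert.mp this with h' | h'
    · exact hfe h'
    · exact (Finset.mem_erase.mp h').1 rfl
  refine ⟨hB'E, hindep, ?_⟩
  rw [hindep]
  have : (B'.card : ℤ) = (B.card : ℤ) := by exact_mod_cast hcard
  rw [this, ← hB.2.1, hB.2.2]

end TutteAux

namespace TutteAux

variable {α : Type} [DecidableEq α] {M : RankMatroid α}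

open Finset

def NoU42 (M : RankMatroid α) : Prop :=
  ¬ ∃ X Y : Finset α, X ⊆ Y ∧ Y ⊆ M.E ∧ (Y \ X).card = 4 ∧
      ∀ Z ⊆ Y \ X, M.rk (Z ∪ X) - M.rk X = min (Z.card : ℤ) 2

lemma pivot_fundC (H : NoU42 M) {B : Finset α} {e f g : α}
    (hB : IsBasis M B) (he : e ∈ M.E) (heB : e ∉ B)
    (hg : g ∈ M.E) (hgB : g ∉ B) (hge : g ≠ e)
    (hfe : f ∈ fundC M B e) (hfg : f ∈ fundC M B g) (hfne : f ≠ e) :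
    fundC M (insert e (B.erase f)) g = symmDiff (fundC M B e) (fundC M B g) := by
  set Ce := fundC M B e with hCedef
  set Cg := fundC M B g with hCgdef
  have hCe : IsCirc M Ce := fundC_circ hB he heB
  have hCg : IsCirc M Cg := fundC_circ hB hg hgB
  have hCeS : Ce ⊆ insert e B := fundC_subset hB he heB
  have hCgS : Cg ⊆ insert g B := fundC_subset hB hg hgB
  have heCe : e ∈ Ce := mem_fundC hB he heB
  have hgCg : g ∈ Cg := mem_fundC hB hg hgB
  have heCg : e ∉ Cg := fun h => by
    rcases Finset.mem_insert.mp (hCgS h) with h' | h'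
    · exact hge h'.symm
    · exact heB h'
  have hgCe : g ∉ Ce := fun h => by
    rcases Finset.mem_insert.mp (hCeS h) with h' | h'
    · exact hge h'
    · exact hgB h'
  have hfB : f ∈ B := by
    rcases Finset.mem_insert.mp (hCeS hfe) with h' | h'
    · exact absurd h' hfne
    · exact h'
  have hfg' : f ≠ g := fun h => hgCe (h ▸ hfe)
  set B' := insert e (B.erase f) with hB'def
  have hB' : IsBasis M (insert e (B.erase f)) := pivot_basis hB he heB hfe hfne
  have hgB' : g ∉ B' := by
    intro h
    rcases Finset.mem_insert.mp h with h' | h'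
    · exact hge h'
    · exact hgB (Finset.mem_of_mem_erase h')
  set U := Ce ∪ Cg with hUdef
  have hUE : U ⊆ M.E := Finset.union_subset hCe.1 hCg.1
  have hUB : ∀ x ∈ U, x ≠ e → x ≠ g → x ∈ B := by
    intro x hx hxe hxg
    rcases Finset.mem_union.mp hx with h' | h'
    · rcases Finset.mem_insert.mp (hCeS h') with h'' | h''
      · exact absurd h'' hxe
      · exact h''
    · rcases Finset.mem_insert.mp (hCgS h') with h'' | h''
      · exact absurd h'' hxg
      · exact h''
  -- classification of circuits inside U
  have hclass : ∀ C, IsCirc M C → C ⊆ U → C = Ce ∨ C = Cg ∨ (e ∈ C ∧ g ∈ C) := by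
    intro C hC hCU
    by_cases hgC : g ∈ C
    · by_cases heC : e ∈ C
      · exact Or.inr (Or.inr ⟨heC, hgC⟩)
      · refine Or.inr (Or.inl ?_)
        refine fundC_unique hB hg hgB hC (fun x hx => ?_)
        by_cases hxg : x = g
        · exact hxg ▸ Finset.mem_insert_self _ _
        · exact Finset.mem_insert_of_mem
            (hUB x (hCU hx) (fun h => heC (h ▸ hx)) hxg)
    · refine Or.inl ?_
      refine fundC_unique hB he heB hC (fun x hx => ?_)
      by_cases hxe : x = e
      · exact hxe ▸ Finset.mem_insert_self _ _
      · exact Finset.mem_insert_of_mem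
          (hUB x (hCU hx) hxe (fun h => hgC (h ▸ hx)))
  set C' := fundC M B' g with hC'def
  have hC' : IsCirc M C' := fundC_circ hB' hg hgB'
  -- C' ⊆ U.erase f
  have hC'sub : C' ⊆ U.erase f ∧ g ∈ C' := by
    obtain ⟨C₀, hC₀, hgC₀, hC₀sub⟩ :=
      strong_elim hCg hCe hfg hfe hgCg hgCe (M := M)
    have hC₀B' : C₀ ⊆ insert g B' := by
      intro x hx
      have hx' := hC₀sub hx
      obtain ⟨hxf, hxU⟩ := Finset.mem_erase.mp hx'
      by_cases hxg : x = g
      · exact hxg ▸ Finset.mem_insert_self _ _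
      · by_cases hxe : x = e
        · exact Finset.mem_insert_of_mem (hxe ▸ Finset.mem_insert_self _ _)
        · refine Finset.mem_insert_of_mem (Finset.mem_insert_of_mem ?_)
          exact Finset.mem_erase.mpr ⟨hxf, hUB x (Finset.mem_union.mpr
            ((Finset.mem_union.mp hxU).symm)) hxe hxg⟩
      
    have hC₀C' : C₀ = C' := fundC_unique hB' hg hgB' hC₀ hC₀B'
    rw [← hC₀C']
    constructor
    · intro x hx
      have := hC₀sub hx
      rw [Finset.mem_erase] at this ⊢
      exact ⟨this.1, Finset.mem_union.mpr (Finset.mem_union.mp this.2).symm⟩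
    · exact hgC₀
  obtain ⟨hC'U, hgC'⟩ := hC'sub
  have hfC' : f ∉ C' := fun h => (Finset.mem_erase.mp (hC'U h)).1 rfl
  have heC' : e ∈ C' := by
    by_contra heC'
    have : C' ⊆ insert g B := by
      intro x hx
      obtain ⟨hxf, hxU⟩ := Finset.mem_erase.mp (hC'U hx)
      by_cases hxg : x = g
      · exact hxg ▸ Finset.mem_insert_self _ _
      · exact Finset.mem_insert_of_mem (hUB x hxU (fun h => heC' (h ▸ hx)) hxg)
    have := fundC_unique hB hg hgB hC' this
    exact hfC' (this ▸ hfg)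
  -- D ⊆ C'
  have hDC' : ∀ w ∈ symmDiff Ce Cg, w ∈ C' := by
    intro w hw
    rw [Finset.mem_symmDiff] at hw
    by_contra hwC'
    rcases hw with ⟨hwCe, hwCg⟩ | ⟨hwCg, hwCe⟩
    · -- w ∈ Ce \ Cg
      have hwe : w ≠ e := fun h => hwC' (h ▸ heC')
      obtain ⟨C₅, hC₅, hwC₅, hC₅sub⟩ :=
        strong_elim hCe hC' heCe heC' hwCe hwC' (M := M)
      have : C₅ ⊆ insert g B := by
        intro x hx
        obtain ⟨hxe, hxU⟩ := Finset.mem_erase.mp (hC₅sub hx)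
        by_cases hxg : x = g
        · exact hxg ▸ Finset.mem_insert_self _ _
        · refine Finset.mem_insert_of_mem ?_
          rcases Finset.mem_union.mp hxU with h' | h'
          · rcases Finset.mem_insert.mp (hCeS h') with h'' | h''
            · exact absurd h'' hxe
            · exact h''
          · obtain ⟨_, hxU'⟩ := Finset.mem_erase.mp (hC'U h')
            exact hUB x hxU' hxe hxg
      have h5 : C₅ = Cg := fundC_unique hB hg hgB hC₅ this
      exact hwCg (h5 ▸ hwC₅)
    · -- w ∈ Cg \ Ce
      have hwg : w ≠ g := fun h => hwC' (h ▸ hgC')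
      obtain ⟨C₅, hC₅, hwC₅, hC₅sub⟩ :=
        strong_elim hCg hC' hgCg hgC' hwCg hwC' (M := M)
      have : C₅ ⊆ insert e B := by
        intro x hx
        obtain ⟨hxg, hxU⟩ := Finset.mem_erase.mp (hC₅sub hx)
        by_cases hxe : x = e
        · exact hxe ▸ Finset.mem_insert_self _ _
        · refine Finset.mem_insert_of_mem ?_
          rcases Finset.mem_union.mp hxU with h' | h'
          · rcases Finset.mem_insert.mp (hCgS h') with h'' | h''
            · exact absurd h'' hxg
            · exact h''
          · obtain ⟨_, hxU'⟩ := Finset.mem_erase.mp (hC'U h')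
            exact hUB x hxU' hxe hxg
      have h5 : C₅ = Ce := fundC_unique hB he heB hC₅ this
      exact hwCe (h5 ▸ hwC₅)
  -- Suppose some a ∈ C' ∩ (Ce ∩ Cg) \ {f} : derive a U42 minor, contradiction.
  have hnoextra : ∀ a ∈ C', a ∈ Ce → a ∈ Cg → a = f := by
    intro a haC' haCe haCg
    by_contra haf
    exfalso
    have hae : a ≠ e := fun h => heCg (h ▸ haCg)
    have hag : a ≠ g := fun h => hgCe (h ▸ haCe)
    have haB : a ∈ B := hUB a (Finset.mem_union_left _ haCe) hae hag
    set Q : Finset α := {e, g, a, f} with hQdef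
    have hmemQ : ∀ x, x ∈ Q ↔ (x = e ∨ x = g ∨ x = a ∨ x = f) := by
      intro x; simp [hQdef]
    have hQU : Q ⊆ U := by
      intro x hx
      rcases (hmemQ x).mp hx with rfl | rfl | rfl | rfl
      · exact Finset.mem_union_left _ heCe
      · exact Finset.mem_union_right _ hgCg
      · exact Finset.mem_union_left _ haCe
      · exact Finset.mem_union_left _ hfe
    have hcardQ : Q.card = 4 := by
      rw [hQdef]
      rw [Finset.card_insert_of_notMem (by simp [hge.symm, hae.symm, hfne.symm]),
        Finset.card_insert_of_notMem (by simp [hag.symm, hfg'.symm]),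
        Finset.card_insert_of_notMem (by simp [haf]), Finset.card_singleton]
    -- the six pair-independence facts
    have six : ∀ p q : α, p ∈ Q → q ∈ Q → p ≠ q → Indep M (U \ {p, q}) := by
      intro p q hp hq hpq
      have hsubE : U \ {p, q} ⊆ M.E := (Finset.sdiff_subset).trans hUE
      by_contra hdep
      have hrklt : M.rk (U \ {p, q}) < ((U \ {p, q}).card : ℤ) :=
        lt_of_le_of_ne (M.rk_le_card _ hsubE) (fun h => hdep ⟨hsubE, h⟩)
      obtain ⟨C₆, hC₆sub, hC₆⟩ := dep_contains_circ _ _ rfl hsubE hrklt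
      have hC₆U : C₆ ⊆ U := hC₆sub.trans Finset.sdiff_subset
      have havoid : ∀ x ∈ C₆, x ≠ p ∧ x ≠ q := by
        intro x hx
        have := (Finset.mem_sdiff.mp (hC₆sub hx)).2
        simp only [Finset.mem_insert, Finset.mem_singleton] at this
        exact ⟨fun h => this (Or.inl h), fun h => this (Or.inr h)⟩
      have hCe_mem : ∀ x ∈ Q, x ≠ g → x ∈ Ce := by
        intro x hx hxg
        rcases (hmemQ x).mp hx with rfl | rfl | rfl | rfl
        · exact heCe
        · exact absurd rfl hxg
        · exact haCe
        · exact hfe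
      have hCg_mem : ∀ x ∈ Q, x ≠ e → x ∈ Cg := by
        intro x hx hxe
        rcases (hmemQ x).mp hx with rfl | rfl | rfl | rfl
        · exact absurd rfl hxe
        · exact hgCg
        · exact haCg
        · exact hfg
      rcases hclass C₆ hC₆ hC₆U with rfl | rfl | ⟨heC₆, hgC₆⟩
      · -- C₆ = Ce
        by_cases hpg : p = g
        · have hqg : q ≠ g := fun h => hpq (hpg.trans h.symm)
          exact (havoid q (hCe_mem q hq hqg)).2 rfl
        · exact (havoid p (hCe_mem p hp hpg)).1 rfl
      · by_cases hpe : p = e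
        · have hqe : q ≠ e := fun h => hpq (hpe.trans h.symm)
          exact (havoid q (hCg_mem q hq hqe)).2 rfl
        · exact (havoid p (hCg_mem p hp hpe)).1 rfl
      · -- e, g ∈ C₆ : then {p, q} = {a, f}
        have hpe : p ≠ e := fun h => (havoid e heC₆).1 h.symm
        have hpg : p ≠ g := fun h => (havoid g hgC₆).1 h.symm
        have hqe : q ≠ e := fun h => (havoid e heC₆).2 h.symm
        have hqg : q ≠ g := fun h => (havoid g hgC₆).2 h.symm
        have hpaf : p = a ∨ p = f := by
          rcases (hmemQ p).mp hp with h | h | h | h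
          · exact absurd h hpe
          · exact absurd h hpg
          · exact Or.inl h
          · exact Or.inr h
        have hqaf : q = a ∨ q = f := by
          rcases (hmemQ q).mp hq with h | h | h | h
          · exact absurd h hqe
          · exact absurd h hqg
          · exact Or.inl h
          · exact Or.inr h
        have hfpq : f = p ∨ f = q := by
          rcases hpaf with rfl | rfl
          · rcases hqaf with rfl | rfl
            · exact absurd rfl hpq
            · exact Or.inr rfl
          · exact Or.inl rfl
        have hapq : a = p ∨ a = q := by
          rcases hpaf with rfl | rfl
          · exact Or.inl rfl
          · rcases hqaf with rfl | rfl
            · exact Or.inr rfl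
            · exact absurd rfl hpq
        have hfC₆ : f ∉ C₆ := by
          rcases hfpq with h | h
          · exact fun hc => (havoid f hc).1 h
          · exact fun hc => (havoid f hc).2 h
        have : C₆ ⊆ insert g B' := by
          intro x hx
          by_cases hxg : x = g
          · exact hxg ▸ Finset.mem_insert_self _ _
          · refine Finset.mem_insert_of_mem ?_
            by_cases hxe : x = e
            · exact hxe ▸ Finset.mem_insert_self _ _
            · refine Finset.mem_insert_of_mem ?_
              refine Finset.mem_erase.mpr ⟨fun h => hfC₆ (h ▸ hx), ?_⟩
              exact hUB x (hC₆U hx) hxe hxg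
        have hC₆C' := fundC_unique hB' hg hgB' hC₆ this
        have haC₆ : a ∈ C₆ := by rw [hC₆C']; exact haC'
        rcases hapq with h | h
        · exact (havoid a haC₆).1 h
        · exact (havoid a haC₆).2 h
    -- now build the minor
    apply H
    refine ⟨U \ Q, U, Finset.sdiff_subset, hUE, ?_, ?_⟩
    · rw [Finset.sdiff_sdiff_self_left, Finset.inter_eq_right.mpr hQU, hcardQ]
    · rw [Finset.sdiff_sdiff_self_left, Finset.inter_eq_right.mpr hQU]
      set X := U \ Q with hXdef
      have hXE : X ⊆ M.E := (Finset.sdiff_subset).trans hUE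
      have hdisj : ∀ Z : Finset α, Z ⊆ Q → Z ∩ X = ∅ := by
        intro Z hZ
        rw [Finset.eq_empty_iff_forall_notMem]
        intro x hx
        obtain ⟨hxZ, hxX⟩ := Finset.mem_inter.mp hx
        exact (Finset.mem_sdiff.mp hxX).2 (hZ hxZ)
      have hpairbig : ∀ Z : Finset α, Z ⊆ Q → Z.card ≤ 2 → Indep M (Z ∪ X) := by
        intro Z hZ hZc
        have hQZ : 2 ≤ (Q \ Z).card := by
          have h1 : (Q \ Z).card = Q.card - Z.card := Finset.card_sdiff_of_subset hZ
          omega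
        obtain ⟨p, hp, q, hq, hpq⟩ := Finset.one_lt_card.mp (by omega : 1 < (Q \ Z).card)
        have hsub : Z ∪ X ⊆ U \ {p, q} := by
          intro x hx
          rw [Finset.mem_sdiff]
          have hxnot : x ≠ p ∧ x ≠ q := by
            rcases Finset.mem_union.mp hx with h' | h'
            · constructor
              · exact fun h => (Finset.mem_sdiff.mp hp).2 (h ▸ h')
              · exact fun h => (Finset.mem_sdiff.mp hq).2 (h ▸ h')
            · constructor
              · exact fun h => (Finset.mem_sdiff.mp h').2
                  (h ▸ (Finset.mem_sdiff.mp hp).1)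
              · exact fun h => (Finset.mem_sdiff.mp h').2
                  (h ▸ (Finset.mem_sdiff.mp hq).1)
          constructor
          · rcases Finset.mem_union.mp hx with h' | h'
            · exact hQU (hZ h')
            · exact (Finset.mem_sdiff.mp h').1
          · simp only [Finset.mem_insert, Finset.mem_singleton]
            rintro (h | h)
            · exact hxnot.1 h
            · exact hxnot.2 h
        exact indep_subset (six p q (Finset.mem_sdiff.mp hp).1 (Finset.mem_sdiff.mp hq).1 hpq) hsub
      have hXindep : Indep M X := by
        have := hpairbig ∅ (Finset.empty_subset _) (by simp)
        simpa using this
      have hrkU : M.rk U = (U.card : ℤ) - 2 := by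
        have hle : M.rk U ≤ (U.card : ℤ) - 2 := by
          have := circ_union_rk hCe hCg (fun h => heCg (h ▸ heCe))
          exact this
        have hsix := six e g (by rw [hmemQ]; tauto) (by rw [hmemQ]; tauto)
          (fun h => hge h.symm)
        have hsubeg : {e, g} ⊆ U := by
          intro x hx
          rcases Finset.mem_insert.mp hx with rfl | hx'
          · exact Finset.mem_union_left _ heCe
          · rw [Finset.mem_singleton] at hx'
            exact hx' ▸ Finset.mem_union_right _ hgCg
        have hcardeg : ({e, g} : Finset α).card = 2 := by
          rw [Finset.card_insert_of_notMem (by simp [hge.symm]), Finset.card_singleton]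
        have hge' : M.rk (U \ {e, g}) ≤ M.rk U := M.rk_mono _ _ (Finset.sdiff_subset) hUE
        have hcard' : (U \ {e, g}).card = U.card - 2 := by
          rw [Finset.card_sdiff_of_subset hsubeg, hcardeg]
        have h2U : 2 ≤ U.card := by
          have := Finset.card_le_card hsubeg
          omega
        have := hsix.2
        rw [hcard'] at this
        have hcast : ((U.card - 2 : ℕ) : ℤ) = (U.card : ℤ) - 2 := by omega
        rw [hcast] at this
        omega
      have hcardX : (X.card : ℤ) = (U.card : ℤ) - 4 := by
        rw [hXdef, Finset.card_sdiff_of_subset hQU, hcardQ]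
        have h4U : 4 ≤ U.card := hcardQ ▸ Finset.card_le_card hQU
        omega
      intro Z hZ
      have hZE : Z ∪ X ⊆ M.E := Finset.union_subset (fun x hx => hUE (hQU (hZ hx))) hXE
      have hcardZX : ((Z ∪ X).card : ℤ) = Z.card + X.card := by
        rw [Finset.card_union_of_disjoint]
        · push_cast; ring
        · rw [Finset.disjoint_iff_inter_eq_empty]
          exact hdisj Z hZ
      rcases le_or_gt Z.card 2 with hZc | hZc
      · have hind := hpairbig Z hZ hZc
        have hmin : min (Z.card : ℤ) 2 = (Z.card : ℤ) := by
          rw [min_eq_left]; exact_mod_cast hZc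
        rw [hmin, hind.2, hcardZX, hXindep.2]
        ring
      · obtain ⟨p, hp, q, hq, hpq⟩ := Finset.one_lt_card.mp (by omega : 1 < Z.card)
        have hpqZ : ({p, q} : Finset α) ⊆ Z := by
          intro x hx
          rcases Finset.mem_insert.mp hx with rfl | hx'
          · exact hp
          · rw [Finset.mem_singleton] at hx'
            exact hx' ▸ hq
        have hcardpq : ({p, q} : Finset α).card = 2 := by
          rw [Finset.card_insert_of_notMem (by simp [hpq]), Finset.card_singleton]
        have hind2 := hpairbig {p, q} (hpqZ.trans hZ) (le_of_eq hcardpq)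
        have hlow : M.rk ({p, q} ∪ X) ≤ M.rk (Z ∪ X) :=
          M.rk_mono _ _ (Finset.union_subset_union_left hpqZ) hZE
        have hcard2 : (({p, q} ∪ X).card : ℤ) = 2 + X.card := by
          rw [Finset.card_union_of_disjoint]
          · rw [hcardpq]; push_cast; ring
          · rw [Finset.disjoint_iff_inter_eq_empty]
            exact hdisj _ (hpqZ.trans hZ)
        have hhigh : M.rk (Z ∪ X) ≤ M.rk U := by
          refine M.rk_mono _ _ ?_ hUE
          refine Finset.union_subset (fun x hx => hQU (hZ hx)) (Finset.sdiff_subset)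
        have hmin : min (Z.card : ℤ) 2 = 2 := by
          rw [min_eq_right]; exact_mod_cast hZc.le
        rw [hmin, hXindep.2]
        have := hind2.2
        omega
  -- conclude C' = symmDiff Ce Cg
  apply Finset.Subset.antisymm
  · intro x hx
    have hxU := Finset.mem_erase.mp (hC'U hx)
    rw [Finset.mem_symmDiff]
    rcases Finset.mem_union.mp hxU.2 with h' | h'
    · by_cases hxCg : x ∈ Cg
      · exact absurd (hnoextra x hx h' hxCg) hxU.1
      · exact Or.inl ⟨h', hxCg⟩
    · by_cases hxCe : x ∈ Ce
      · exact absurd (hnoextra x hx hxCe h') hxU.1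
      · exact Or.inr ⟨h', hxCe⟩
  · intro x hx
    exact hDC' x hx

end TutteAux

namespace TutteAux

variable {α : Type} [DecidableEq α]

open Finset

section CharTwo

variable {W : Type} [AddCommGroup W] [Module (ZMod 2) W]

lemma c2_add_self (x : W) : x + x = 0 := by
  have h : (2 : ZMod 2) • x = x + x := two_smul _ x
  rw [show (2 : ZMod 2) = 0 by decide, zero_smul] at h
  exact h.symm

lemma c2_eq_of_add_eq_zero {x y : W} (h : x + y = 0) : x = y := by
  have h2 : x + (y + y) = (x + y) + y := (add_assoc x y y).symm
  rw [c2_add_self y, add_zero, h, zero_add] at h2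
  exact h2

lemma sum_symmDiff_c2 (w : α → W) (s t : Finset α) :
    ∑ x ∈ symmDiff s t, w x = (∑ x ∈ s, w x) + (∑ x ∈ t, w x) := by
  have hd : Disjoint (s \ t) (t \ s) := by
    rw [Finset.disjoint_left]
    intro a ha hb
    exact (Finset.mem_sdiff.mp hb).2 (Finset.mem_sdiff.mp ha).1
  have h1 : symmDiff s t = (s \ t) ∪ (t \ s) := by
    rw [symmDiff_def]; rfl
  have h2 : ∑ x ∈ s ∩ t, w x + ∑ x ∈ s \ t, w x = ∑ x ∈ s, w x :=
    Finset.sum_inter_add_sum_sdiff s t w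
  have h3 : ∑ x ∈ s ∩ t, w x + ∑ x ∈ t \ s, w x = ∑ x ∈ t, w x := by
    rw [Finset.inter_comm]
    exact Finset.sum_inter_add_sum_sdiff t s w
  have h5 : ∑ x ∈ s ∩ t, w x + ∑ x ∈ s ∩ t, w x = 0 := c2_add_self _
  calc ∑ x ∈ symmDiff s t, w x
      = ∑ x ∈ s \ t, w x + ∑ x ∈ t \ s, w x := by rw [h1, Finset.sum_union hd]
    _ = (∑ x ∈ s ∩ t, w x + ∑ x ∈ s ∩ t, w x) + (∑ x ∈ s \ t, w x + ∑ x ∈ t \ s, w x) := by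
        rw [h5, zero_add]
    _ = (∑ x ∈ s ∩ t, w x + ∑ x ∈ s \ t, w x) + (∑ x ∈ s ∩ t, w x + ∑ x ∈ t \ s, w x) := by
        abel
    _ = (∑ x ∈ s, w x) + (∑ x ∈ t, w x) := by rw [h2, h3]

lemma zmod2_eq_zero_or_one (x : ZMod 2) : x = 0 ∨ x = 1 := by revert x; decide

lemma li_iff_noZeroSum (v : α → W) (I : Finset α) :
    LinearIndependent (ZMod 2) (fun i : {a // a ∈ I} => v i.1) ↔
      ∀ S ⊆ I, S.Nonempty → ∑ x ∈ S, v x ≠ 0 := by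
  classical
  constructor
  · intro hli S hSI hSne hsum
    obtain ⟨x₀, hx₀⟩ := hSne
    have key := Fintype.linearIndependent_iff.mp hli
      (fun i => if i.1 ∈ S then (1 : ZMod 2) else 0)
    have hsum2 : ∑ i : {a // a ∈ I}, (if i.1 ∈ S then (1 : ZMod 2) else 0) • v i.1 = 0 := by
      have e1 : ∀ i : {a // a ∈ I},
          (if i.1 ∈ S then (1 : ZMod 2) else 0) • v i.1 =
            (if i.1 ∈ S then v i.1 else 0) := by
        intro i
        by_cases h : i.1 ∈ S <;> simp [h]
      rw [Fintype.sum_congr _ _ e1]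
      rw [Finset.univ_eq_attach]
      rw [Finset.sum_attach I (fun x => if x ∈ S then v x else 0)]
      rw [Finset.sum_ite_mem, Finset.inter_eq_right.mpr hSI]
      exact hsum
    have := key hsum2 ⟨x₀, hSI hx₀⟩
    simp only [hx₀, if_pos] at this
    exact one_ne_zero this
  · intro hns
    rw [Fintype.linearIndependent_iff]
    intro g hg i
    by_contra hgi
    set S : Finset α := (I.attach.filter (fun j => g j ≠ 0)).image Subtype.val with hSdef
    have hSI : S ⊆ I := by
      intro x hx
      obtain ⟨j, _, rfl⟩ := Finset.mem_image.mp hx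
      exact j.2
    have hSne : S.Nonempty := by
      refine ⟨i.1, Finset.mem_image.mpr ⟨i, ?_, rfl⟩⟩
      exact Finset.mem_filter.mpr ⟨Finset.mem_attach _ _, hgi⟩
    have hsum : ∑ x ∈ S, v x = 0 := by
      have e0 : ∑ x ∈ S, v x = ∑ j ∈ I.attach.filter (fun j => g j ≠ 0), v j.1 :=
        Finset.sum_image (fun x _ y _ h => Subtype.val_injective h)
      have e1 : ∑ j ∈ I.attach.filter (fun j => g j ≠ 0), v j.1 =
          ∑ j ∈ I.attach.filter (fun j => g j ≠ 0), g j • v j.1 := by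
        refine Finset.sum_congr rfl (fun j hj => ?_)
        have := (Finset.mem_filter.mp hj).2
        rcases zmod2_eq_zero_or_one (g j) with h | h
        · exact absurd h this
        · rw [h, one_smul]
      have e2 : ∑ j ∈ I.attach.filter (fun j => g j ≠ 0), g j • v j.1 =
          ∑ j ∈ I.attach, g j • v j.1 := by
        refine Finset.sum_filter_of_ne (fun j _ h => ?_)
        intro hg0
        rw [hg0, zero_smul] at h
        exact h rfl
      rw [e0, e1, e2, ← Finset.univ_eq_attach]
      exact hg
    exact hns S hSI hSne hsum

end CharTwo

variable {M : RankMatroid α}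

/-- the standard representation candidate built from a basis -/
noncomputable def repvec (M : RankMatroid α) (B : Finset α) : α → α → ZMod 2 :=
  fun x => if x ∈ B then (fun y => if y = x then 1 else 0)
    else if x ∈ M.E then ∑ b ∈ (fundC M B x).erase x, (fun y => if y = b then 1 else 0)
    else 0

def Good (M : RankMatroid α) (v : α → α → ZMod 2) (B : Finset α) : Prop :=
  IsBasis M B ∧
  (∀ S ⊆ B, S.Nonempty → ∑ x ∈ S, v x ≠ 0) ∧
  (∀ e ∈ M.E, e ∉ B → v e = ∑ x ∈ (fundC M B e).erase e, v x)

lemma good_base {B : Finset α} (hB : IsBasis M B) : Good M (repvec M B) B := by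
  refine ⟨hB, ?_, ?_⟩
  · intro S hSB hSne hsum
    obtain ⟨x₀, hx₀⟩ := hSne
    have h0 : ∀ x ∈ S, repvec M B x = (fun y => if y = x then (1 : ZMod 2) else 0) := by
      intro x hx
      rw [repvec, if_pos (hSB hx)]
    have : (∑ x ∈ S, repvec M B x) x₀ = 1 := by
      rw [Finset.sum_apply]
      rw [Finset.sum_congr rfl (fun x hx => by rw [h0 x hx])]
      rw [Finset.sum_ite_eq S x₀ (fun _ => (1 : ZMod 2))]
      exact if_pos hx₀
    rw [hsum] at this
    simp at this
  · intro e heE heB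
    have hsub : (fundC M B e).erase e ⊆ B := by
      intro x hx
      obtain ⟨hxe, hxC⟩ := Finset.mem_erase.mp hx
      rcases Finset.mem_insert.mp (fundC_subset hB heE heB hxC) with h | h
      · exact absurd h hxe
      · exact h
    rw [repvec, if_neg heB, if_pos heE]
    refine Finset.sum_congr rfl (fun x hx => ?_)
    rw [repvec, if_pos (hsub hx)]

lemma pivot_good (H : NoU42 M) {v : α → α → ZMod 2} {B : Finset α} {e f : α}
    (hG : Good M v B) (he : e ∈ M.E) (heB : e ∉ B)
    (hf : f ∈ fundC M B e) (hfe : f ≠ e) :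
    Good M v (insert e (B.erase f)) := by
  obtain ⟨hB, hGa, hGb⟩ := hG
  have hB' : IsBasis M (insert e (B.erase f)) := pivot_basis hB he heB hf hfe
  have hfB : f ∈ B := by
    rcases Finset.mem_insert.mp (fundC_subset hB he heB hf) with h | h
    · exact absurd h hfe
    · exact h
  have hfB' : f ∉ insert e (B.erase f) := by
    intro h
    rcases Finset.mem_insert.mp h with h' | h'
    · exact hfe h'
    · exact (Finset.mem_erase.mp h').1 rfl
  have hfCe : f ∈ (fundC M B e).erase e := Finset.mem_erase.mpr ⟨hfe, hf⟩
  have hCeB : (fundC M B e).erase e ⊆ B := by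
    intro x hx
    obtain ⟨hxe, hxC⟩ := Finset.mem_erase.mp hx
    rcases Finset.mem_insert.mp (fundC_subset hB he heB hxC) with h | h
    · exact absurd h hxe
    · exact h
  have hve : v e = ∑ x ∈ (fundC M B e).erase e, v x := hGb e he heB
  refine ⟨hB', ?_, ?_⟩
  · -- no nonempty zero-sum inside B'
    intro S hSB' hSne hsum
    by_cases heS : e ∈ S
    · set T := symmDiff ((fundC M B e).erase e) (S.erase e) with hTdef
      have hTsum : ∑ x ∈ T, v x = 0 := by
        rw [hTdef, sum_symmDiff_c2, ← hve]
        rw [← hsum]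
        exact (Finset.add_sum_erase S v heS)
      have hTB : T ⊆ B := by
        intro x hx
        rcases Finset.mem_symmDiff.mp hx with ⟨h1, _⟩ | ⟨h1, _⟩
        · exact hCeB h1
        · obtain ⟨hxe, hxS⟩ := Finset.mem_erase.mp h1
          rcases Finset.mem_insert.mp (hSB' hxS) with h | h
          · exact absurd h hxe
          · exact Finset.mem_of_mem_erase h
      have hfT : f ∈ T := by
        rw [hTdef, Finset.mem_symmDiff]
        left
        refine ⟨hfCe, fun hc => ?_⟩
        exact hfB' (hSB' (Finset.mem_of_mem_erase hc))
      exact hGa T hTB ⟨f, hfT⟩ hTsum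
    · have hSB : S ⊆ B := by
        intro x hx
        rcases Finset.mem_insert.mp (hSB' hx) with h | h
        · exact absurd (h ▸ hx) heS
        · exact Finset.mem_of_mem_erase h
      exact hGa S hSB hSne hsum
  · -- fundamental circuit sums for the new basis
    intro g hgE hgB'
    have hge : g ≠ e := fun h => hgB' (h ▸ Finset.mem_insert_self _ _)
    by_cases hgf : g = f
    · rw [hgf]
      have hCf : fundC M B e = fundC M (insert e (B.erase f)) f := by
        refine fundC_unique hB' (hB.1 hfB) hfB' (fundC_circ hB he heB) ?_
        intro x hx
        rcases Finset.mem_insert.mp (fundC_subset hB he heB hx) with h | h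
        · exact h ▸ Finset.mem_insert_of_mem (Finset.mem_insert_self _ _)
        · by_cases hxf : x = f
          · exact hxf ▸ Finset.mem_insert_self _ _
          · exact Finset.mem_insert_of_mem
              (Finset.mem_insert_of_mem (Finset.mem_erase.mpr ⟨hxf, h⟩))
      rw [← hCf]
      have heCef : e ∈ (fundC M B e).erase f :=
        Finset.mem_erase.mpr ⟨fun h => hfe h.symm, mem_fundC hB he heB⟩
      have hsplit1 : ∑ x ∈ (fundC M B e).erase f, v x =
          v e + ∑ x ∈ ((fundC M B e).erase f).erase e, v x :=
        (Finset.add_sum_erase _ v heCef).symm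
      have hsplit2 : ∑ x ∈ (fundC M B e).erase e, v x =
          v f + ∑ x ∈ ((fundC M B e).erase e).erase f, v x :=
        (Finset.add_sum_erase _ v hfCe).symm
      have hcomm : ((fundC M B e).erase f).erase e = ((fundC M B e).erase e).erase f := by
        ext x
        simp only [Finset.mem_erase]
        tauto
      rw [hsplit1, hcomm, hve, hsplit2, add_assoc, c2_add_self, add_zero]
    · have hgB : g ∉ B := by
        intro h
        exact hgB' (Finset.mem_insert_of_mem (Finset.mem_erase.mpr ⟨hgf, h⟩))
      by_cases hfCg : f ∈ fundC M B g
      · -- pivot case : Lemma P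
        have hP := pivot_fundC H hB he heB hgE hgB hge hf hfCg hfe
        rw [hP]
        have hgD : g ∈ symmDiff (fundC M B e) (fundC M B g) := by
          rw [Finset.mem_symmDiff]
          right
          refine ⟨mem_fundC hB hgE hgB, fun hc => ?_⟩
          rcases Finset.mem_insert.mp (fundC_subset hB he heB hc) with h | h
          · exact hge h
          · exact hgB h
        have hsplit : ∑ x ∈ symmDiff (fundC M B e) (fundC M B g), v x =
            v g + ∑ x ∈ (symmDiff (fundC M B e) (fundC M B g)).erase g, v x :=
          (Finset.add_sum_erase _ v hgD).symm
        have hsum0 : ∑ x ∈ symmDiff (fundC M B e) (fundC M B g), v x = 0 := by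
          rw [sum_symmDiff_c2]
          have h1 : ∑ x ∈ fundC M B e, v x = 0 := by
            rw [← Finset.add_sum_erase _ v (mem_fundC hB he heB), ← hve]
            exact c2_add_self _
          have h2 : ∑ x ∈ fundC M B g, v x = 0 := by
            rw [← Finset.add_sum_erase _ v (mem_fundC hB hgE hgB), ← hGb g hgE hgB]
            exact c2_add_self _
          rw [h1, h2, add_zero]
        rw [hsplit] at hsum0
        exact c2_eq_of_add_eq_zero hsum0
      · -- circuit unchanged
        have hCg : fundC M B g = fundC M (insert e (B.erase f)) g := by
          refine fundC_unique hB' hgE hgB' (fundC_circ hB hgE hgB) ?_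
          intro x hx
          rcases Finset.mem_insert.mp (fundC_subset hB hgE hgB hx) with h | h
          · exact h ▸ Finset.mem_insert_self _ _
          · refine Finset.mem_insert_of_mem (Finset.mem_insert_of_mem ?_)
            exact Finset.mem_erase.mpr ⟨fun hc => hfCg (hc ▸ hx), h⟩
        rw [← hCg]
        exact hGb g hgE hgB

end TutteAux

namespace TutteAux

variable {α : Type} [DecidableEq α] {M : RankMatroid α}

open Finset

lemma main_claim (H : NoU42 M) {v : α → α → ZMod 2} {B₀ : Finset α} (hG : Good M v B₀) :
    ∀ I ⊆ M.E, (M.rk I = (I.card : ℤ) ↔ ∀ S ⊆ I, S.Nonempty → ∑ x ∈ S, v x ≠ 0) := by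
  classical
  by_contra hbad
  push_neg at hbad
  obtain ⟨I₀, hI₀E, hI₀pre⟩ := hbad
  have hI₀ : ¬(M.rk I₀ = (I₀.card : ℤ) ↔ ∀ S ⊆ I₀, S.Nonempty → ∑ x ∈ S, v x ≠ 0) := by
    tauto
  set Bad : Finset (Finset α) := M.E.powerset.filter
    (fun I => ¬(M.rk I = (I.card : ℤ) ↔ ∀ S ⊆ I, S.Nonempty → ∑ x ∈ S, v x ≠ 0)) with hBad
  have hBadne : Bad.Nonempty :=
    ⟨I₀, Finset.mem_filter.mpr ⟨Finset.mem_powerset.mpr hI₀E, hI₀⟩⟩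
  obtain ⟨Y, hYBad, hYmin⟩ := Finset.exists_min_image Bad (fun I => I.card) hBadne
  rw [hBad, Finset.mem_filter, Finset.mem_powerset] at hYBad
  obtain ⟨hYE, hYbad⟩ := hYBad
  have hproper : ∀ S : Finset α, S ⊂ Y →
      (M.rk S = (S.card : ℤ) ↔ ∀ T ⊆ S, T.Nonempty → ∑ x ∈ T, v x ≠ 0) := by
    intro S hS
    by_contra hSbad
    have hmem : S ∈ Bad := Finset.mem_filter.mpr
      ⟨Finset.mem_powerset.mpr ((hS.1).trans hYE), hSbad⟩
    have h1 := hYmin S hmem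
    have h2 := Finset.card_lt_card hS
    omega
  -- dichotomy for the minimal bad set
  have hdich : (M.rk Y = (Y.card : ℤ) ∧ (∑ x ∈ Y, v x = 0) ∧ Y.Nonempty) ∨
      (IsCirc M Y ∧ ∀ S ⊆ Y, S.Nonempty → ∑ x ∈ S, v x ≠ 0) := by
    by_cases hrk : M.rk Y = (Y.card : ℤ)
    · left
      refine ⟨hrk, ?_⟩
      have hnz : ¬ (∀ S ⊆ Y, S.Nonempty → ∑ x ∈ S, v x ≠ 0) := by
        intro hc; exact hYbad (iff_of_true hrk hc)
      push_neg at hnz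
      obtain ⟨S, hSY, hSne, hSsum⟩ := hnz
      rcases eq_or_ne S Y with rfl | hne
      · exact ⟨hSsum, hSne⟩
      · exfalso
        have hSsub : S ⊂ Y := lt_of_le_of_ne hSY hne
        have hSindep := indep_subset ⟨hYE, hrk⟩ hSY
        exact ((hproper S hSsub).mp hSindep.2) S (Finset.Subset.refl _) hSne hSsum
    · right
      have hnz : ∀ S ⊆ Y, S.Nonempty → ∑ x ∈ S, v x ≠ 0 := by
        by_contra hc
        exact hYbad (iff_of_false hrk hc)
      refine ⟨⟨hYE, lt_of_le_of_ne (M.rk_le_card _ hYE) hrk, ?_⟩, hnz⟩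
      intro x hx
      by_contra hex
      have herE : Y.erase x ⊆ M.E := (Finset.erase_subset _ _).trans hYE
      have herdep : M.rk (Y.erase x) ≠ ((Y.erase x).card : ℤ) := hex
      have hss : Y.erase x ⊂ Y := Finset.erase_ssubset hx
      have hiff := hproper _ hss
      have hne2 : ¬ (∀ T ⊆ Y.erase x, T.Nonempty → ∑ y ∈ T, v y ≠ 0) :=
        fun hc => herdep (hiff.mpr hc)
      push_neg at hne2
      obtain ⟨T, hT, hTne, hTsum⟩ := hne2
      exact hnz T (hT.trans (Finset.erase_subset _ _)) hTne hTsum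
  -- descent over bases
  have hdesc : ∀ n (B : Finset α), Good M v B → (Y \ B).card = n → False := by
    intro n
    induction n with
    | zero =>
      intro B hGB hcard
      have hYB : Y ⊆ B := Finset.sdiff_eq_empty_iff_subset.mp
        (Finset.card_eq_zero.mp hcard)
      rcases hdich with ⟨hYindep, hYsum, hYne⟩ | ⟨hYcirc, _⟩
      · exact hGB.2.1 Y hYB hYne hYsum
      · have := (basis_indep hGB.1 hYB).2
        have := hYcirc.2.1
        omega
    | succ n ih =>
      intro B hGB hcard
      have hYBne : (Y \ B).Nonempty := Finset.card_pos.mp (by omega)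
      obtain ⟨e, he⟩ := hYBne
      obtain ⟨heY, heB⟩ := Finset.mem_sdiff.mp he
      have heE : e ∈ M.E := hYE heY
      by_cases hex : ∃ f ∈ (fundC M B e).erase e, f ∉ Y
      · obtain ⟨f, hfCe, hfY⟩ := hex
        obtain ⟨hfe, hfC⟩ := Finset.mem_erase.mp hfCe
        have hGB' := pivot_good H hGB heE heB hfC hfe
        refine ih (insert e (B.erase f)) hGB' ?_
        have hset : Y \ insert e (B.erase f) = (Y \ B).erase e := by
          ext x
          constructor
          · intro hx
            obtain ⟨hxY, hxB'⟩ := Finset.mem_sdiff.mp hx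
            have hxe : x ≠ e := fun h => hxB' (h ▸ Finset.mem_insert_self _ _)
            refine Finset.mem_erase.mpr ⟨hxe, Finset.mem_sdiff.mpr ⟨hxY, fun hxB => ?_⟩⟩
            rcases eq_or_ne x f with rfl | hxf
            · exact hfY hxY
            · exact hxB' (Finset.mem_insert_of_mem (Finset.mem_erase.mpr ⟨hxf, hxB⟩))
          · intro hx
            obtain ⟨hxe, hx2⟩ := Finset.mem_erase.mp hx
            obtain ⟨hxY, hxB⟩ := Finset.mem_sdiff.mp hx2
            refine Finset.mem_sdiff.mpr ⟨hxY, fun hc => ?_⟩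
            rcases Finset.mem_insert.mp hc with h | h
            · exact hxe h
            · exact hxB (Finset.mem_of_mem_erase h)
        rw [hset, Finset.card_erase_of_mem he, hcard]
        omega
      · push_neg at hex
        have hCeY : fundC M B e ⊆ Y := by
          intro x hx
          rcases eq_or_ne x e with rfl | hxe
          · exact heY
          · exact hex x (Finset.mem_erase.mpr ⟨hxe, hx⟩)
        rcases hdich with ⟨hYindep, _, _⟩ | ⟨hYcirc, hYnz⟩
        · have := (indep_subset ⟨hYE, hYindep⟩ hCeY).2
          have := (fundC_circ hGB.1 heE heB).2.1
          omega
        · have hCeYeq : fundC M B e = Y :=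
            circ_subset_circ (fundC_circ hGB.1 heE heB) hYcirc hCeY
          have hsum0 : ∑ x ∈ Y, v x = 0 := by
            rw [← hCeYeq, ← Finset.add_sum_erase _ v (mem_fundC hGB.1 heE heB),
              ← hGB.2.2 e heE heB]
            exact c2_add_self _
          exact hYnz Y (Finset.Subset.refl _) ⟨e, heY⟩ hsum0
  exact hdesc (Y \ B₀).card B₀ hG rfl

end TutteAux

/-- Tutte's excluded-minor characterisation: `M` is binary iff it has no
`U₄²`-minor. -/
theorem stmt19 {α : Type} [DecidableEq α] (M : RankMatroid α) :
    RepresentableF2 M ↔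
      ¬ ∃ X Y : Finset α, X ⊆ Y ∧ Y ⊆ M.E ∧ (Y \ X).card = 4 ∧
        ∀ Z ⊆ Y \ X, M.rk (Z ∪ X) - M.rk X = min (Z.card : ℤ) 2 := by
  classical
  constructor
  · rintro ⟨W, _i1, _i2, v, hv⟩ ⟨X, Y, hXY, hYE, hcard4, hrkZ⟩
    have hXE : X ⊆ M.E := hXY.trans hYE
    have hmain : ∀ I ⊆ M.E,
        (M.rk I = (I.card : ℤ) ↔ ∀ S ⊆ I, S.Nonempty → ∑ x ∈ S, v x ≠ 0) :=
      fun I hI => (hv I hI).trans (TutteAux.li_iff_noZeroSum v I)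
    obtain ⟨X₀, hX₀X, hX₀rk, hX₀eq⟩ := TutteAux.exists_basis_of (M := M) hXE
    set P := Y \ X with hP
    have hPE : P ⊆ M.E := (Finset.sdiff_subset).trans hYE
    have hPX : ∀ p ∈ P, p ∉ X := fun p hp => (Finset.mem_sdiff.mp hp).2
    have hPX₀ : ∀ p ∈ P, p ∉ X₀ := fun p hp hc => hPX p hp (hX₀X hc)
    -- pair facts
    have hpair : ∀ p q, p ∈ P → q ∈ P → p ≠ q →
        ∀ S ⊆ X₀ ∪ {p, q}, S.Nonempty → ∑ x ∈ S, v x ≠ 0 := by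
      intro p q hp hq hpq
      have hZ : ({p, q} : Finset α) ⊆ P := by
        intro x hx
        rcases Finset.mem_insert.mp hx with rfl | hx'
        · exact hp
        · exact (Finset.mem_singleton.mp hx') ▸ hq
      have hcard2 : ({p, q} : Finset α).card = 2 := by
        rw [Finset.card_insert_of_notMem (by simp [hpq]), Finset.card_singleton]
      have hrk2 := hrkZ {p, q} hZ
      rw [hcard2] at hrk2
      have hmin2 : min ((2 : ℕ) : ℤ) 2 = 2 := by norm_num
      rw [hmin2] at hrk2
      have hIE : X₀ ∪ ({p, q} : Finset α) ⊆ M.E :=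
        Finset.union_subset (hX₀X.trans hXE) (hZ.trans hPE)
      have hu : (X₀ ∪ {p, q}) ∪ X = {p, q} ∪ X := by
        ext x
        simp only [Finset.mem_union]
        constructor
        · rintro ((h | h) | h)
          · exact Or.inr (hX₀X h)
          · exact Or.inl h
          · exact Or.inr h
        · rintro (h | h)
          · exact Or.inl (Or.inr h)
          · exact Or.inr h
      have hi : (X₀ ∪ {p, q}) ∩ X = X₀ := by
        ext x
        simp only [Finset.mem_inter, Finset.mem_union]
        constructor
        · rintro ⟨h1 | h1, h2⟩
          · exact h1
          · exact absurd h2 (hPX x (hZ h1))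
        · intro h
          exact ⟨Or.inl h, hX₀X h⟩
      have hsub := M.rk_submod (X₀ ∪ {p, q}) X hIE hXE
      rw [hu, hi] at hsub
      have hdisj : Disjoint X₀ ({p, q} : Finset α) := by
        rw [Finset.disjoint_right]
        intro x hx
        exact hPX₀ x (hZ hx)
      have hcardI : ((X₀ ∪ {p, q}).card : ℤ) = (X₀.card : ℤ) + 2 := by
        rw [Finset.card_union_of_disjoint hdisj, hcard2]
        push_cast; ring
      have hle := M.rk_le_card (X₀ ∪ {p, q}) hIE
      have hIindep : M.rk (X₀ ∪ {p, q}) = ((X₀ ∪ {p, q}).card : ℤ) := by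
        rw [hcardI]; rw [hcardI] at hle
        linarith [hX₀rk, hX₀eq]
      exact (hmain _ hIE).mp hIindep
    -- extract the four points of P
    have h4 : P.card = 4 := hcard4
    obtain ⟨p1, hp1⟩ := Finset.card_pos.mp (by omega : 0 < P.card)
    have h3 : (P.erase p1).card = 3 := by
      rw [Finset.card_erase_of_mem hp1, h4]
    obtain ⟨p2, p3, p4, h23, h24, h34, heq3⟩ := Finset.card_eq_three.mp h3
    have hp2e : p2 ∈ P.erase p1 := by rw [heq3]; simp
    have hp3e : p3 ∈ P.erase p1 := by rw [heq3]; simp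
    have hp4e : p4 ∈ P.erase p1 := by rw [heq3]; simp
    have hp2 : p2 ∈ P := Finset.mem_of_mem_erase hp2e
    have hp3 : p3 ∈ P := Finset.mem_of_mem_erase hp3e
    have hp4 : p4 ∈ P := Finset.mem_of_mem_erase hp4e
    have h21 : p2 ≠ p1 := (Finset.mem_erase.mp hp2e).1
    have h31 : p3 ≠ p1 := (Finset.mem_erase.mp hp3e).1
    have h41 : p4 ≠ p1 := (Finset.mem_erase.mp hp4e).1
    -- triple facts
    have htrip : ∀ k, k ∈ P → k ≠ p1 → k ≠ p2 →
        ∃ S, S ⊆ X₀ ∪ {p1, p2, k} ∧ (∑ x ∈ S, v x = 0) ∧ p1 ∈ S ∧ p2 ∈ S ∧ k ∈ S := by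
      intro k hk hk1 hk2
      have hZ : ({p1, p2, k} : Finset α) ⊆ P := by
        intro x hx
        rcases Finset.mem_insert.mp hx with rfl | hx'
        · exact hp1
        · rcases Finset.mem_insert.mp hx' with rfl | hx''
          · exact hp2
          · exact (Finset.mem_singleton.mp hx'') ▸ hk
      have hcard3 : ({p1, p2, k} : Finset α).card = 3 := by
        rw [Finset.card_insert_of_notMem (by simp [h21.symm, hk1.symm]),
          Finset.card_insert_of_notMem (by simp [hk2.symm]), Finset.card_singleton]
      have hrk3 := hrkZ {p1, p2, k} hZ
      rw [hcard3] at hrk3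
      have hmin3 : min ((3 : ℕ) : ℤ) 2 = 2 := by norm_num
      rw [hmin3] at hrk3
      have hIE : X₀ ∪ ({p1, p2, k} : Finset α) ⊆ M.E :=
        Finset.union_subset (hX₀X.trans hXE) (hZ.trans hPE)
      have hmono : M.rk (X₀ ∪ {p1, p2, k}) ≤ M.rk ({p1, p2, k} ∪ X) := by
        refine M.rk_mono _ _ ?_ (Finset.union_subset (hZ.trans hPE) hXE)
        intro x hx
        rcases Finset.mem_union.mp hx with h | h
        · exact Finset.mem_union_right _ (hX₀X h)
        · exact Finset.mem_union_left _ h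
      have hdisj : Disjoint X₀ ({p1, p2, k} : Finset α) := by
        rw [Finset.disjoint_right]
        intro x hx
        exact hPX₀ x (hZ hx)
      have hcardI : ((X₀ ∪ {p1, p2, k}).card : ℤ) = (X₀.card : ℤ) + 3 := by
        rw [Finset.card_union_of_disjoint hdisj, hcard3]
        push_cast; ring
      have hne : M.rk (X₀ ∪ {p1, p2, k}) ≠ ((X₀ ∪ {p1, p2, k}).card : ℤ) := by
        rw [hcardI]
        intro hc
        rw [hc] at hmono
        linarith [hX₀rk, hX₀eq]
      have hnz : ¬ (∀ S ⊆ X₀ ∪ {p1, p2, k}, S.Nonempty → ∑ x ∈ S, v x ≠ 0) :=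
        fun hc => hne ((hmain _ hIE).mpr hc)
      push_neg at hnz
      obtain ⟨S, hS, hSne, hSsum⟩ := hnz
      have hmem : ∀ m a b, m ∈ ({p1, p2, k} : Finset α) → a ∈ ({p1, p2, k} : Finset α) →
          b ∈ ({p1, p2, k} : Finset α) → True := fun _ _ _ _ _ _ => trivial
      -- membership of each of p1 p2 k in S
      have key : ∀ a b c : α, ({p1, p2, k} : Finset α) = {a, b, c} → a ∈ P → b ∈ P →
          a ≠ b → c ∉ S → False := by
        intro a b c hset ha hb hab hcS
        have hSsub : S ⊆ X₀ ∪ {a, b} := by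
          intro x hx
          rcases Finset.mem_union.mp (hS hx) with h | h
          · exact Finset.mem_union_left _ h
          · rw [hset] at h
            rcases Finset.mem_insert.mp h with rfl | h'
            · exact Finset.mem_union_right _ (Finset.mem_insert_self _ _)
            · rcases Finset.mem_insert.mp h' with rfl | h''
              · exact Finset.mem_union_right _
                  (Finset.mem_insert_of_mem (Finset.mem_singleton_self _))
              · rw [Finset.mem_singleton.mp h''] at hx ⊢
                exact absurd hx hcS
        exact hpair a b ha hb hab S hSsub hSne hSsum
      have hkS : k ∈ S := by
        by_contra hc
        exact key p1 p2 k rfl hp1 hp2 h21.symm hc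
      have hp1S : p1 ∈ S := by
        by_contra hc
        refine key p2 k p1 ?_ hp2 hk hk2.symm hc
        ext x; simp only [Finset.mem_insert, Finset.mem_singleton]; tauto
      have hp2S : p2 ∈ S := by
        by_contra hc
        refine key p1 k p2 ?_ hp1 hk hk1.symm hc
        ext x; simp only [Finset.mem_insert, Finset.mem_singleton]; tauto
      exact ⟨S, hS, hSsum, hp1S, hp2S, hkS⟩
    obtain ⟨S3, hS3sub, hS3sum, hS3p1, hS3p2, hS3p3⟩ := htrip p3 hp3 h31 h23.symm
    obtain ⟨S4, hS4sub, hS4sum, hS4p1, hS4p2, hS4p4⟩ := htrip p4 hp4 h41 h24.symm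
    have hp3S4 : p3 ∉ S4 := by
      intro hc
      rcases Finset.mem_union.mp (hS4sub hc) with h | h
      · exact hPX₀ p3 hp3 h
      · rcases Finset.mem_insert.mp h with h' | h'
        · exact h31 h'
        · rcases Finset.mem_insert.mp h' with h'' | h''
          · exact h23 h''.symm
          · exact h34 (Finset.mem_singleton.mp h'')
    have hp4S3 : p4 ∉ S3 := by
      intro hc
      rcases Finset.mem_union.mp (hS3sub hc) with h | h
      · exact hPX₀ p4 hp4 h
      · rcases Finset.mem_insert.mp h with h' | h'
        · exact h41 h'
        · rcases Finset.mem_insert.mp h' with h'' | h''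
          · exact h24 h''.symm
          · exact h34 (Finset.mem_singleton.mp h'').symm
    have hTsum : ∑ x ∈ symmDiff S3 S4, v x = 0 := by
      rw [TutteAux.sum_symmDiff_c2, hS3sum, hS4sum, add_zero]
    have hTne : (symmDiff S3 S4).Nonempty :=
      ⟨p3, Finset.mem_symmDiff.mpr (Or.inl ⟨hS3p3, hp3S4⟩)⟩
    have hTsub : symmDiff S3 S4 ⊆ X₀ ∪ {p3, p4} := by
      intro x hx
      rcases Finset.mem_symmDiff.mp hx with ⟨h1, h2⟩ | ⟨h1, h2⟩
      · rcases Finset.mem_union.mp (hS3sub h1) with h | h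
        · exact Finset.mem_union_left _ h
        · rcases Finset.mem_insert.mp h with rfl | h'
          · exact absurd hS4p1 h2
          · rcases Finset.mem_insert.mp h' with rfl | h''
            · exact absurd hS4p2 h2
            · rw [Finset.mem_singleton.mp h'']
              exact Finset.mem_union_right _ (Finset.mem_insert_self _ _)
      · rcases Finset.mem_union.mp (hS4sub h1) with h | h
        · exact Finset.mem_union_left _ h
        · rcases Finset.mem_insert.mp h with rfl | h'
          · exact absurd hS3p1 h2
          · rcases Finset.mem_insert.mp h' with rfl | h''
            · exact absurd hS3p2 h2
            · rw [Finset.mem_singleton.mp h'']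
              exact Finset.mem_union_right _
                (Finset.mem_insert_of_mem (Finset.mem_singleton_self _))
    exact hpair p3 p4 hp3 hp4 h34 (symmDiff S3 S4) hTsub hTne hTsum
  · intro H
    have H' : TutteAux.NoU42 M := H
    obtain ⟨B₀, hB₀⟩ := TutteAux.exists_basis M
    refine ⟨α → ZMod 2, inferInstance, inferInstance, TutteAux.repvec M B₀, ?_⟩
    intro I hIE
    exact (TutteAux.main_claim H' (TutteAux.good_base hB₀) I hIE).trans
      (TutteAux.li_iff_noZeroSum _ I).symm
end
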